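/- arXiv:1805.03824 — 14 statements merged into one kernel-verified Lean document; each statement's English description precedes it below -/
import Mathlib

section
/- Let $(X_n : n \in \omega)$ be a sequentially absorbing covering of a topological space $X$, let $Y$ be a first countable topological space, and let $f : Y \to X$ be continuous. Then for every $y \in Y$ there exist a neighborhood $U$ of $y$ in $Y$ and a number $n \in \omega$ such that $f(U) \subseteq X_n$. -/
/-! Diagonal argument: if no basic neighbourhood `B n` of `y` were mapped into `Xn n`, pick
`z n ∈ B n` with `f (z n) ∉ Xn n`. Then `f ∘ z → f y`, so all `f (z n)` lie in one piece `Xn k`,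
contradicting `f (z k) ∉ Xn k`. -/

open Filter Topology Set

theorem Filter.exists_mem_of_forall_tendsto_exists_forall_mem {α : Type*} {l : Filter α}
    [l.IsCountablyGenerated] {S : ℕ → Set α}
    (h : ∀ u : ℕ → α, Tendsto u atTop l → ∃ k, ∀ n, u n ∈ S k) : ∃ n, S n ∈ l := by
  by_contra! hS
  obtain ⟨B, hB⟩ := l.exists_antitone_basis
  have hescape : ∀ n, ∃ z ∈ B n, z ∉ S n := fun n =>
    not_subset.mp fun hsub => hS n (mem_of_superset (hB.mem n) hsub)
  choose z hzB hzS using hescape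
  obtain ⟨k, hk⟩ := h z (hB.tendsto hzB)
  exact hzS k (hk k)

theorem continuous_into_seq_absorbing_locally_into_piece_general
    {X Y : Type*} [TopologicalSpace X] [TopologicalSpace Y]
    [FirstCountableTopology Y]
    (Xn : ℕ → Set X)
    (habs : ∀ (u : ℕ → X) (x : X), Tendsto u atTop (𝓝 x) →
      ∃ k, ∀ n, u n ∈ Xn k)
    (f : Y → X) (hf : Continuous f) :
    ∀ y : Y, ∃ U ∈ 𝓝 y, ∃ n, f '' U ⊆ Xn n := by
  intro y
  obtain ⟨n, hn⟩ := exists_mem_of_forall_tendsto_exists_forall_mem (l := 𝓝 y)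
    (S := fun n => f ⁻¹' Xn n) fun u hu => habs (f ∘ u) (f y) ((hf.tendsto y).comp hu)
  exact ⟨_, hn, n, image_preimage_subset f (Xn n)⟩

theorem continuous_into_seq_absorbing_locally_into_piece
    {X Y : Type*} [TopologicalSpace X] [TopologicalSpace Y]
    [FirstCountableTopology Y]
    (Xn : ℕ → Set X)
    (hcover : (⋃ n, Xn n) = Set.univ)
    (hmono : Monotone Xn)
    (habs : ∀ (u : ℕ → X) (x : X), Tendsto u atTop (𝓝 x) →
      ∃ k, ∀ n, u n ∈ Xn k)
    (f : Y → X) (hf : Continuous f) :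
    ∀ y : Y, ∃ U ∈ 𝓝 y, ∃ n, f '' U ⊆ Xn n :=
  continuous_into_seq_absorbing_locally_into_piece_general Xn habs f hf
end

section
/- Let $(X_n : n \in \omega)$ be a sequentially absorbing covering of a first countable topological space $X$ such that each subspace $X_n$ is Hausdorff. Then $X$ is Hausdorff. -/
open Filter Topology Set

/- A first countable space is Hausdorff as soon as convergent sequences have unique limits, since
`𝓝 x ⊓ 𝓝 y` is countably generated. In the situation of the theorem, a sequence converging to `x`
and `y` lies in some closed piece `Xn k`, hence so do `x` and `y`, and uniqueness of limits in the
Hausdorff subspace `Xn k` gives `x = y`. -/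

theorem t2Space_of_tendsto_nhds_unique {X : Type*} [TopologicalSpace X] [FirstCountableTopology X]
    (h : ∀ (u : ℕ → X) (x y : X), Tendsto u atTop (𝓝 x) → Tendsto u atTop (𝓝 y) → x = y) :
    T2Space X := by
  refine t2_iff_nhds.2 fun {x y} hxy => ?_
  obtain ⟨u, hu⟩ := (𝓝 x ⊓ 𝓝 y).exists_seq_tendsto
  exact h u x y (hu.mono_right inf_le_left) (hu.mono_right inf_le_right)

theorem IsClosed.eq_of_tendsto_of_forall_mem {X : Type*} [TopologicalSpace X] {F : Set X}
    (hF : IsClosed F) [T2Space F] {u : ℕ → X} {x y : X} (hu : ∀ n, u n ∈ F)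
    (hx : Tendsto u atTop (𝓝 x)) (hy : Tendsto u atTop (𝓝 y)) : x = y := by
  have hxF : x ∈ F := hF.mem_of_tendsto hx (Eventually.of_forall hu)
  have hyF : y ∈ F := hF.mem_of_tendsto hy (Eventually.of_forall hu)
  have := tendsto_nhds_unique (X := F) (f := fun n => ⟨u n, hu n⟩) (a := ⟨x, hxF⟩) (b := ⟨y, hyF⟩)
    (tendsto_subtype_rng.2 hx) (tendsto_subtype_rng.2 hy)
  exact congrArg Subtype.val this

theorem seq_absorbing_hausdorff_pieces_t2_general
    {X : Type*} [TopologicalSpace X] [FirstCountableTopology X]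
    (Xn : ℕ → Set X)
    (hclosed : ∀ n, IsClosed (Xn n))
    (habs : ∀ (u : ℕ → X) (x : X), Tendsto u atTop (𝓝 x) →
      ∃ k, ∀ n, u n ∈ Xn k)
    (hT2 : ∀ n, T2Space (Xn n)) :
    T2Space X := by
  refine t2Space_of_tendsto_nhds_unique fun u x y hx hy => ?_
  obtain ⟨k, hk⟩ := habs u x hx
  have := hT2 k
  exact (hclosed k).eq_of_tendsto_of_forall_mem hk hx hy

theorem seq_absorbing_hausdorff_pieces_t2
    {X : Type*} [TopologicalSpace X] [FirstCountableTopology X]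
    (Xn : ℕ → Set X)
    (hcover : (⋃ n, Xn n) = Set.univ)
    (hclosed : ∀ n, IsClosed (Xn n))
    (hmono : Monotone Xn)
    (habs : ∀ (u : ℕ → X) (x : X), Tendsto u atTop (𝓝 x) →
      ∃ k, ∀ n, u n ∈ Xn k)
    (hT2 : ∀ n, T2Space (Xn n)) :
    T2Space X :=
  seq_absorbing_hausdorff_pieces_t2_general Xn hclosed habs hT2
end

section
/- Let $(X_n : n \in \omega)$ be a sequentially absorbing covering of a Fréchet–Urysohn topological space $X$ by closed regular subspaces $X_n$. Then $X$ is regular. -/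
open Filter Topology Set

/-- In a closed regular subspace `A`, any relative neighborhood of `x ∈ A` contains
a closed (in the ambient space) relative neighborhood. -/
lemma aux_closed_rel_nhd {X : Type*} [TopologicalSpace X] {A s : Set X}
    (hA : IsClosed A) (hregA : RegularSpace A) {x : X} (hx : x ∈ A)
    (hs : s ∈ 𝓝[A] x) :
    ∃ t, IsClosed t ∧ t ⊆ s ∧ t ⊆ A ∧ t ∈ 𝓝[A] x := by
  haveI := hregA
  have hmap : map (Subtype.val : A → X) (𝓝 (⟨x, hx⟩ : A)) = 𝓝[A] x :=
    map_nhds_subtype_val (⟨x, hx⟩ : A)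
  have h1 : (Subtype.val : A → X) ⁻¹' s ∈ 𝓝 (⟨x, hx⟩ : A) := by
    rw [← hmap] at hs; exact hs
  obtain ⟨t', ht'n, ht'c, ht's⟩ := exists_mem_nhds_isClosed_subset h1
  refine ⟨Subtype.val '' t', ?_, ?_, ?_, ?_⟩
  · exact hA.isClosedEmbedding_subtypeVal.isClosedMap _ ht'c
  · rintro y ⟨z, hz, rfl⟩; exact ht's hz
  · rintro y ⟨z, _, rfl⟩; exact z.2
  · rw [← hmap]; exact image_mem_map ht'n

theorem seq_absorbing_regular_pieces_regular
    {X : Type*} [TopologicalSpace X] [FrechetUrysohnSpace X]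
    (Xn : ℕ → Set X)
    (hcover : (⋃ n, Xn n) = Set.univ)
    (hclosed : ∀ n, IsClosed (Xn n))
    (hmono : Monotone Xn)
    (habs : ∀ (u : ℕ → X) (x : X), Tendsto u atTop (𝓝 x) →
      ∃ k, ∀ n, u n ∈ Xn k)
    (hreg : ∀ n, RegularSpace (Xn n)) :
    RegularSpace X := by
  apply RegularSpace.of_exists_mem_nhds_isClosed_subset
  intro x s hs
  -- find an index containing x and reindex
  have hx : x ∈ ⋃ n, Xn n := hcover ▸ mem_univ x
  obtain ⟨k0, hk0⟩ := mem_iUnion.1 hx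
  set Y : ℕ → Set X := fun k => Xn (k0 + k) with hY
  have hxY : ∀ k, x ∈ Y k := fun k => hmono (Nat.le_add_right k0 k) hk0
  have hYmono : Monotone Y := fun a b hab => hmono (by omega)
  have hYclosed : ∀ k, IsClosed (Y k) := fun k => hclosed _
  -- the inductive property
  set P : ℕ → Set X → Prop :=
    fun k C => IsClosed C ∧ C ⊆ s ∧ C ⊆ Y k ∧ C ∈ 𝓝[Y k] x with hP
  -- base case
  obtain ⟨C0, hC0c, hC0s, hC0A, hC0n⟩ :=
    aux_closed_rel_nhd (hYclosed 0) (hreg _) (hxY 0) (mem_nhdsWithin_of_mem_nhds hs)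
  have hbase : P 0 C0 := ⟨hC0c, hC0s, hC0A, hC0n⟩
  -- inductive step
  have hstep : ∀ k (C : Set X), P k C →
      ∃ D, P (k + 1) D ∧ C ⊆ D ∧ D ∩ Y k ⊆ C := by
    intro k C hC
    obtain ⟨hCc, hCs, hCA, hCn⟩ := hC
    rw [mem_nhdsWithin] at hCn
    obtain ⟨O, hOopen, hxO, hOsub⟩ := hCn
    have hW : (O ∩ interior s) ∈ 𝓝[Y (k+1)] x :=
      mem_nhdsWithin_of_mem_nhds
        ((hOopen.inter isOpen_interior).mem_nhds ⟨hxO, mem_interior_iff_mem_nhds.2 hs⟩)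
    obtain ⟨E, hEc, hEsub, hEA, hEn⟩ :=
      aux_closed_rel_nhd (hYclosed (k+1)) (hreg _) (hxY (k+1)) hW
    refine ⟨C ∪ E, ⟨hCc.union hEc, ?_, ?_, ?_⟩, subset_union_left, ?_⟩
    · exact union_subset hCs (fun y hy => interior_subset (hEsub hy).2)
    · exact union_subset (hCA.trans (hYmono (Nat.le_succ k))) hEA
    · exact mem_of_superset hEn subset_union_right
    · rintro y ⟨hy | hy, hyk⟩
      · exact hy
      · exact hOsub ⟨(hEsub hy).1, hyk⟩
  choose! D hD using hstep
  set f : ℕ → Set X := fun k => Nat.rec C0 D k with hf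
  have hf0 : f 0 = C0 := rfl
  have hfs : ∀ k, f (k + 1) = D k (f k) := fun k => rfl
  have hfP : ∀ k, P k (f k) := by
    intro k; induction k with
    | zero => exact hbase
    | succ k ih => exact (hD k (f k) ih).1
  have hflink : ∀ k, f k ⊆ f (k + 1) ∧ f (k + 1) ∩ Y k ⊆ f k := by
    intro k
    exact ⟨(hD k (f k) (hfP k)).2.1, (hD k (f k) (hfP k)).2.2⟩
  have hfmono : Monotone f := monotone_nat_of_le_succ fun k => (hflink k).1
  -- key absorption property of the f's
  have hfabs : ∀ m j, f j ∩ Y m ⊆ f m := by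
    intro m j
    rcases le_or_gt j m with h | h
    · exact fun y hy => hfmono h hy.1
    · clear hfs hf0
      induction j with
      | zero => omega
      | succ j ih =>
        rcases le_or_gt j m with h2 | h2
        · have : m = j := by omega
          subst this
          exact (hflink m).2
        · intro y hy
          exact ih h2 ⟨(hflink j).2 ⟨hy.1, hYmono (by omega) hy.2⟩, hy.2⟩
  refine ⟨⋃ k, f k, ?_, ?_, iUnion_subset fun k => (hfP k).2.1⟩
  · -- it's a neighborhood of x
    rw [← mem_interior_iff_mem_nhds]
    by_contra hnot
    have hcl : x ∈ closure (⋃ k, f k)ᶜ := by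
      rw [closure_compl]; exact hnot
    obtain ⟨u, hu, hulim⟩ := mem_closure_iff_seq_limit.1 hcl
    obtain ⟨m, hm⟩ := habs u x hulim
    have hmY : ∀ n, u n ∈ Y m := fun n => hmono (Nat.le_add_left m k0) (hm n)
    have htn : Tendsto u atTop (𝓝[Y m] x) :=
      tendsto_nhdsWithin_iff.2 ⟨hulim, Eventually.of_forall hmY⟩
    have : ∀ᶠ n in atTop, u n ∈ f m := htn.eventually_mem (hfP m).2.2.2
    obtain ⟨n, hn⟩ := this.exists
    exact hu n (mem_iUnion.2 ⟨m, hn⟩)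
  · -- it's closed
    apply IsSeqClosed.isClosed
    intro u y hu hulim
    obtain ⟨m, hm⟩ := habs u y hulim
    have hmY : ∀ n, u n ∈ Y m := fun n => hmono (Nat.le_add_left m k0) (hm n)
    have hufm : ∀ n, u n ∈ f m := by
      intro n
      obtain ⟨j, hj⟩ := mem_iUnion.1 (hu n)
      exact hfabs m j ⟨hj, hmY n⟩
    exact mem_iUnion.2 ⟨m, (hfP m).1.mem_of_tendsto hulim (Eventually.of_forall hufm)⟩
end

section
/- Let $(X_n : n \in \omega)$ be a sequentially absorbing covering of a sequential topological space $X$ by closed perfectly normal subspaces $X_n$. Then $X$ is perfectly normal; in particular, for every closed set $F \subseteq X$ there is a continuous function $f : X \to [0,\infty)$ with $F = f^{-1}(0)$. -/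
open Filter Topology Set

/-!
Because every convergent sequence lies, together with its limit, in a single closed piece `X_k`,
the topology of `X` is coherent with the pieces: a function continuous on each `X_n` is
continuous. Given a closed set `F`, a `[0, 1]`-valued function on `X_n` vanishing exactly on
`F ∩ X_n` extends, by Tietze's theorem in the perfectly normal piece `X_{n+1}`, to one on
`X_{n+1}` vanishing exactly on `F ∩ X_{n+1}`. The compatible extensions glue to a continuous
function on `X` whose zero set is `F`, which characterizes perfect normality.
-/

def IsZeroSetFunctionOn {X : Type*} [TopologicalSpace X] (g : X → ℝ) (F s : Set X) : Prop :=
  ContinuousOn g s ∧ MapsTo g s (Icc 0 1) ∧ ∀ x ∈ s, g x = 0 ↔ x ∈ F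

namespace IsZeroSetFunctionOn

variable {X Y : Type*} [TopologicalSpace X] [TopologicalSpace Y] {g : X → ℝ} {F s : Set X}

lemma comp (hg : IsZeroSetFunctionOn g F s) {e : Y → X} (he : Continuous e) :
    IsZeroSetFunctionOn (g ∘ e) (e ⁻¹' F) (e ⁻¹' s) :=
  ⟨hg.1.comp he.continuousOn (mapsTo_preimage e s), hg.2.1.comp (mapsTo_preimage e s),
    fun y hy => hg.2.2 (e y) hy⟩

lemma congr (hg : IsZeroSetFunctionOn g F s) {f : X → ℝ} (hfg : EqOn f g s) :
    IsZeroSetFunctionOn f F s :=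
  ⟨hg.1.congr hfg, fun x hx => by rw [hfg hx]; exact hg.2.1 hx,
    fun x hx => by rw [hfg hx]; exact hg.2.2 x hx⟩

lemma of_domRestrict (hg : IsZeroSetFunctionOn (s.domRestrict g) ((↑) ⁻¹' F) univ) :
    IsZeroSetFunctionOn g F s :=
  ⟨continuousOn_iff_continuous_domRestrict.2 (continuousOn_univ.1 hg.1),
    fun x hx => hg.2.1 (mem_univ (⟨x, hx⟩ : s)), fun x hx => hg.2.2 ⟨x, hx⟩ (mem_univ _)⟩

/-- The extension is `max h (ψ * φ)`, where `h ∈ [0, 1]` is a Tietze extension of `g` on `A`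
and of `0` on `F`, and `ψ`, `φ` vanish exactly on `A`, `F`: the second term kills the zeros of
`h` outside `A ∪ F` without changing anything on `A`. -/
theorem exists_extension [PerfectlyNormalSpace Y] {g : Y → ℝ} {A F : Set Y} (hA : IsClosed A)
    (hF : IsClosed F) (hg : IsZeroSetFunctionOn g F A) :
    ∃ G, IsZeroSetFunctionOn G F univ ∧ EqOn G g A := by
  classical
  obtain ⟨φ, hφF, hφ⟩ := perfectlyNormalSpace_iff_forall_isClosed_preimage_zero.1 ‹_› F hF
  obtain ⟨ψ, hψA, hψ⟩ := perfectlyNormalSpace_iff_forall_isClosed_preimage_zero.1 ‹_› A hA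
  have hqA : EqOn (A.piecewise g 0) g A := fun y hy => piecewise_eq_of_mem _ _ _ hy
  have hqF : EqOn (A.piecewise g 0) 0 F := fun y hy => by
    by_cases hyA : y ∈ A
    · simpa [hyA] using (hg.2.2 y hyA).2 hy
    · simp [hyA]
  have hq : ContinuousOn (A.piecewise g 0) (A ∪ F) :=
    (hg.1.congr hqA).union_of_isClosed (continuousOn_const.congr hqF) hA hF
  have hqI (y : ↥(A ∪ F)) : A.piecewise g 0 y ∈ Icc (0 : ℝ) 1 := by
    rcases y with ⟨y, hyA | hyF⟩
    · simpa [hqA hyA] using hg.2.1 hyA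
    · simp [hqF hyF]
  obtain ⟨h, hhI, hhq⟩ := ContinuousMap.exists_restrict_eq_forall_mem_of_closed
    ⟨_, hq.domRestrict⟩ hqI (nonempty_Icc.2 zero_le_one) (hA.union hF)
  have hhA (y : Y) (hy : y ∈ A ∪ F) : h y = A.piecewise g 0 y := congr($hhq ⟨y, hy⟩)
  have hψφ (y : Y) : ψ y * φ y ∈ Icc (0 : ℝ) 1 :=
    ⟨mul_nonneg (hψ y).1 (hφ y).1, mul_le_one₀ (hψ y).2 (hφ y).1 (hφ y).2⟩
  refine ⟨fun y => max (h y) (ψ y * φ y),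
    ⟨(h.continuous.max (ψ.continuous.mul φ.continuous)).continuousOn,
      fun y _ => ⟨le_max_of_le_left (hhI y).1, max_le (hhI y).2 (hψφ y).2⟩, fun y _ => ?_⟩,
    fun y hy => ?_⟩
  · constructor
    · intro h0
      have hh0 : h y = 0 := le_antisymm (h0 ▸ le_max_left _ _) (hhI y).1
      have hψφ0 : ψ y * φ y = 0 := le_antisymm (h0 ▸ le_max_right _ _) (hψφ y).1
      rcases mul_eq_zero.1 hψφ0 with hψy | hφy
      · have hyA : y ∈ A := hψA ▸ hψy
        exact (hg.2.2 y hyA).1 (by rw [← hqA hyA, ← hhA y (.inl hyA), hh0])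
      · exact hφF ▸ hφy
    · intro hyF
      have hφy : φ y = 0 := by rw [hφF] at hyF; exact hyF
      simp [hhA y (.inr hyF), hqF hyF, hφy]
  · have hψy : ψ y = 0 := by rw [hψA] at hy; exact hy
    change max (h y) (ψ y * φ y) = g y
    rw [hψy, zero_mul, max_eq_left (hhI y).1, hhA y (.inl hy), hqA hy]

theorem exists_extension_of_subset {S A : Set X} [PerfectlyNormalSpace S] (hA : IsClosed A)
    (hAS : A ⊆ S) (hF : IsClosed F) (hg : IsZeroSetFunctionOn g F A) :
    ∃ G, IsZeroSetFunctionOn G F S ∧ EqOn G g A := by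
  obtain ⟨G, hG, hGg⟩ := (hg.comp (e := ((↑) : S → X)) continuous_subtype_val).exists_extension
    (hA.preimage continuous_subtype_val) (hF.preimage continuous_subtype_val)
  have hextend (y : S) : Function.extend ((↑) : S → X) G 0 (y : X) = G y :=
    Subtype.val_injective.extend_apply G 0 y
  refine ⟨Function.extend ((↑) : S → X) G 0, of_domRestrict ?_, fun x hx => ?_⟩
  · rwa [show S.domRestrict (Function.extend ((↑) : S → X) G 0) = G from funext hextend]
  · exact (hextend ⟨x, hAS hx⟩).trans (hGg (show (⟨x, hAS hx⟩ : S) ∈ (↑) ⁻¹' A from hx))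

end IsZeroSetFunctionOn

theorem exists_seq_of_exists_succ {α : Type*} {P : ℕ → α → Prop} {R : ℕ → α → α → Prop}
    (h0 : ∃ a, P 0 a) (hsucc : ∀ n a, P n a → ∃ b, P (n + 1) b ∧ R n a b) :
    ∃ f : ℕ → α, ∀ n, P n (f n) ∧ R n (f n) (f (n + 1)) := by
  choose a₀ ha₀ using h0
  choose next hnextP hnextR using hsucc
  let f (n : ℕ) : {a // P n a} := Nat.rec ⟨a₀, ha₀⟩ (fun n a => ⟨next n a a.2, hnextP n a a.2⟩) n
  exact ⟨fun n => (f n).1, fun n => ⟨(f n).2, hnextR n _ (f n).2⟩⟩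

theorem exists_eqOn_of_eqOn_succ {X β : Type*} {s : ℕ → Set X} (hs : Monotone s)
    (hcover : ∀ x, ∃ n, x ∈ s n) {g : ℕ → X → β} (hg : ∀ n, EqOn (g (n + 1)) (g n) (s n)) :
    ∃ f : X → β, ∀ n, EqOn f (g n) (s n) := by
  have hle {m n : ℕ} (hmn : m ≤ n) : EqOn (g n) (g m) (s m) := by
    induction n, hmn using Nat.le_induction with
    | base => exact eqOn_refl _ _
    | succ n hmn ih => exact ((hg n).mono (hs hmn)).trans ih
  choose k hk using hcover
  refine ⟨fun x => g (k x) x, fun n x hx => ?_⟩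
  rcases le_total (k x) n with h | h
  · exact (hle h (hk x)).symm
  · exact hle h hx

section SeqAbsorbing

variable {X : Type*} [TopologicalSpace X] {Xn : ℕ → Set X}

theorem Topology.IsCoherentWith.of_seqAbsorbing [SequentialSpace X]
    (hclosed : ∀ n, IsClosed (Xn n))
    (habs : ∀ (u : ℕ → X) (x : X), Tendsto u atTop (𝓝 x) → ∃ k, ∀ n, u n ∈ Xn k) :
    IsCoherentWith (range Xn) := by
  refine (IsCoherentWith.of_seq (S := {t | ∃ k, t ⊆ Xn k}) fun u x hux => ?_).enlarge ?_
  · obtain ⟨k, hk⟩ := habs u x hux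
    exact ⟨k, insert_subset ((hclosed k).mem_of_tendsto hux (.of_forall hk)) (range_subset_iff.2 hk)⟩
  · rintro t ⟨k, hk⟩
    exact ⟨Xn k, mem_range_self k, hk⟩

theorem exists_isZeroSetFunctionOn_univ (hcoh : IsCoherentWith (range Xn))
    (hcover : ∀ x, ∃ n, x ∈ Xn n) (hclosed : ∀ n, IsClosed (Xn n)) (hmono : Monotone Xn)
    (hpn : ∀ n, PerfectlyNormalSpace (Xn n)) {F : Set X} (hF : IsClosed F) :
    ∃ f, IsZeroSetFunctionOn f F univ := by
  have hbase : ∃ g, IsZeroSetFunctionOn g F (Xn 0) := by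
    have := hpn 0
    exact (IsZeroSetFunctionOn.exists_extension_of_subset (g := 0) isClosed_empty
      (empty_subset _) hF ⟨continuousOn_empty _, mapsTo_empty _ _, fun _ h => h.elim⟩).imp
      fun _ h => h.1
  have hstep (n : ℕ) (g : X → ℝ) (hg : IsZeroSetFunctionOn g F (Xn n)) :
      ∃ g', IsZeroSetFunctionOn g' F (Xn (n + 1)) ∧ EqOn g' g (Xn n) := by
    have := hpn (n + 1)
    exact hg.exists_extension_of_subset (hclosed n) (hmono n.le_succ) hF
  obtain ⟨g, hg⟩ := exists_seq_of_exists_succ hbase hstep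
  obtain ⟨f, hf⟩ := exists_eqOn_of_eqOn_succ hmono hcover fun n => (hg n).2
  have hfXn (n : ℕ) : IsZeroSetFunctionOn f F (Xn n) := (hg n).1.congr (hf n)
  refine ⟨f, continuousOn_univ.2 (hcoh.continuous_iff.2 (forall_mem_range.2 fun n => (hfXn n).1)),
    fun x _ => ?_, fun x _ => ?_⟩
  all_goals obtain ⟨n, hn⟩ := hcover x
  exacts [(hfXn n).2.1 hn, (hfXn n).2.2 x hn]

end SeqAbsorbing

theorem seq_absorbing_perfectly_normal_pieces_perfectly_normal_general
    {X : Type*} [TopologicalSpace X] [SequentialSpace X]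
    (Xn : ℕ → Set X)
    (hclosed : ∀ n, IsClosed (Xn n))
    (hmono : Monotone Xn)
    (habs : ∀ (u : ℕ → X) (x : X), Tendsto u atTop (𝓝 x) →
      ∃ k, ∀ n, u n ∈ Xn k)
    (hpn : ∀ n, PerfectlyNormalSpace (Xn n)) :
    PerfectlyNormalSpace X ∧
      ∀ F : Set X, IsClosed F → ∃ f : X → ℝ, Continuous f ∧
        (∀ x, 0 ≤ f x) ∧ F = f ⁻¹' {0} := by
  have hcover (x : X) : ∃ n, x ∈ Xn n := (habs _ x tendsto_const_nhds).imp fun _ hk => hk 0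
  have hzero (F : Set X) (hF : IsClosed F) :
      ∃ f : C(X, ℝ), F = f ⁻¹' {0} ∧ ∀ x, f x ∈ Icc (0 : ℝ) 1 := by
    obtain ⟨f, hfc, hfI, hf0⟩ := exists_isZeroSetFunctionOn_univ
      (.of_seqAbsorbing hclosed habs) hcover hclosed hmono hpn hF
    exact ⟨⟨f, continuousOn_univ.1 hfc⟩, ext fun x => (hf0 x (mem_univ x)).symm,
      fun x => hfI (mem_univ x)⟩
  refine ⟨perfectlyNormalSpace_iff_forall_isClosed_preimage_zero.2 hzero, fun F hF => ?_⟩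
  obtain ⟨f, hfF, hfI⟩ := hzero F hF
  exact ⟨f, f.continuous, fun x => (hfI x).1, hfF⟩

theorem seq_absorbing_perfectly_normal_pieces_perfectly_normal
    {X : Type*} [TopologicalSpace X] [SequentialSpace X]
    (Xn : ℕ → Set X)
    (hcover : (⋃ n, Xn n) = Set.univ)
    (hclosed : ∀ n, IsClosed (Xn n))
    (hmono : Monotone Xn)
    (habs : ∀ (u : ℕ → X) (x : X), Tendsto u atTop (𝓝 x) →
      ∃ k, ∀ n, u n ∈ Xn k)
    (hpn : ∀ n, PerfectlyNormalSpace (Xn n)) :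
    PerfectlyNormalSpace X ∧
      ∀ F : Set X, IsClosed F → ∃ f : X → ℝ, Continuous f ∧
        (∀ x, 0 ≤ f x) ∧ F = f ⁻¹' {0} :=
  seq_absorbing_perfectly_normal_pieces_perfectly_normal_general Xn hclosed hmono habs hpn
end

section
/- Let $(X_n : n \in \omega)$ be a sequentially absorbing covering of a first countable topological space $X$ by closed metrizable subspaces $X_n$. Then $X$ is metrizable. -/
/-!
Sequential absorption and first countability force every point into the interior of some `Xₖ`.
Collapsing `Xₖ \ interior Xₖ`, together with everything outside `Xₖ`, to a single point turns a
metric on `Xₖ` into a continuous map from `X` to a pseudo-emetric space which induces the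
topology of `X` at each point of `interior Xₖ`. The product of these countably many maps is
therefore an inducing map into a pseudometrizable space, and `X` is T0 because any two points lie
in a common metrizable `Xₖ`.
-/

open Filter Topology Set Function Metric TopologicalSpace
open scoped ENNReal

theorem min_add_le_min_add_min {α : Type*} [AddCommMonoid α] [LinearOrder α]
    [IsOrderedAddMonoid α] [CanonicallyOrderedAdd α] {exy eyz exz rx ry rz : α}
    (hE : exz ≤ exy + eyz) (hx : rx ≤ ry + exy) (hz : rz ≤ ry + eyz) :
    min exz (rx + rz) ≤ min exy (rx + ry) + min eyz (ry + rz) := by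
  rcases min_cases exy (rx + ry) with ⟨h₁, -⟩ | ⟨h₁, -⟩ <;>
    rcases min_cases eyz (ry + rz) with ⟨h₂, -⟩ | ⟨h₂, -⟩ <;> rw [h₁, h₂]
  · exact min_le_of_left_le hE
  · refine min_le_of_right_le ?_
    calc rx + rz ≤ ry + exy + rz := by gcongr
      _ = exy + (ry + rz) := by abel
  · refine min_le_of_right_le ?_
    calc rx + rz ≤ rx + (ry + eyz) := by gcongr
      _ = rx + ry + eyz := by abel
  · refine min_le_of_right_le ?_
    calc rx + rz ≤ rx + rz + (ry + ry) := le_self_add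
      _ = rx + ry + (ry + rz) := by abel

noncomputable section

variable {X Y : Type*}

/-- `Y` with the set `C` collapsed to the extra point `none`. -/
def Collapse (_C : Set Y) : Type _ := Option Y

namespace Collapse

variable {C : Set Y}

def of (a : Y) : Collapse C := some a

def base : Collapse C := none

end Collapse

open Collapse

def collapseMap (e : Y → X) (C : Set Y) : X → Collapse C :=
  extend e of fun _ => base

variable {e : Y → X} {C : Set Y}

theorem collapseMap_apply (he : Injective e) (a : Y) : collapseMap e C (e a) = of a :=
  he.extend_apply _ _ a

theorem collapseMap_of_notMem_range {x : X} (hx : x ∉ range e) : collapseMap e C x = base :=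
  extend_apply' _ _ _ hx

variable [PseudoEMetricSpace Y]

namespace Collapse

def height (C : Set Y) : Option Y → ℝ≥0∞
  | some a => infEDist a C
  | none => 0

def directEDist : Option Y → Option Y → ℝ≥0∞
  | some a, some b => edist a b
  | none, none => 0
  | _, _ => ∞

theorem directEDist_comm (p q : Option Y) : directEDist p q = directEDist q p := by
  rcases p with _ | a <;> rcases q with _ | b <;> simp [directEDist, edist_comm]

theorem directEDist_triangle (p q r : Option Y) :
    directEDist p r ≤ directEDist p q + directEDist q r := by
  rcases p with _ | a <;> rcases q with _ | b <;> rcases r with _ | c <;>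
    simp [directEDist, edist_triangle]

theorem height_le_height_add_directEDist (C : Set Y) (p q : Option Y) :
    height C p ≤ height C q + directEDist p q := by
  rcases p with _ | a <;> rcases q with _ | b <;>
    simp [height, directEDist, infEDist_le_infEDist_add_edist]

/-- A shortest route from `p` to `q` either avoids the collapsed point or passes through it. -/
instance : PseudoEMetricSpace (Collapse C) where
  edist p q := min (directEDist p q) (height C p + height C q)
  edist_self p := by cases p <;> simp [directEDist, height]
  edist_comm p q := congrArg₂ min (directEDist_comm p q) (add_comm _ _)
  edist_triangle p q r := min_add_le_min_add_min (directEDist_triangle p q r)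
    (height_le_height_add_directEDist C p q)
    (directEDist_comm q r ▸ height_le_height_add_directEDist C r q)

theorem edist_of_of (a b : Y) :
    edist (of a : Collapse C) (of b) = min (edist a b) (infEDist a C + infEDist b C) := rfl

theorem edist_base_of (b : Y) : edist (base : Collapse C) (of b) = infEDist b C := by
  simp [edist, directEDist, height, base, of]

end Collapse

variable [TopologicalSpace X]

theorem comap_nhds_collapseMap_le (he : IsEmbedding e) (hC : IsClosed C) {a : Y} (ha : a ∉ C) :
    comap (collapseMap e C) (𝓝 (collapseMap e C (e a))) ≤ 𝓝 (e a) := by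
  rw [collapseMap_apply he.injective]
  have hpos : 0 < infEDist a C := infEDist_pos_iff_notMem_closure.2 (hC.closure_eq.symm ▸ ha)
  intro s hs
  obtain ⟨δ, hδ, hball⟩ := EMetric.mem_nhds_iff.1 (he.continuous.continuousAt.preimage_mem_nhds hs)
  -- Within distance `infEDist a C` of `of a`, no route through the collapsed point is short enough.
  refine mem_comap.2 ⟨eball (of a) (min δ (infEDist a C)),
    eball_mem_nhds _ (lt_min hδ hpos), fun x hx => ?_⟩
  rw [mem_preimage, mem_eball] at hx
  by_cases hxe : x ∈ range e
  · obtain ⟨b, rfl⟩ := hxe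
    rw [collapseMap_apply he.injective, edist_of_of] at hx
    have hlt := (min_lt_iff.1 hx).resolve_right (not_lt.2 ((min_le_right _ _).trans le_add_self))
    exact hball (hlt.trans_le (min_le_left _ _))
  · rw [collapseMap_of_notMem_range hxe, edist_base_of] at hx
    exact absurd (hx.trans_le (min_le_right _ _)) (lt_irrefl _)

theorem continuous_collapseMap (he : IsClosedEmbedding e)
    (hC : ∀ a, e a ∉ interior (range e) → a ∈ C) : Continuous (collapseMap e C) := by
  refine continuous_iff_continuousAt.2 fun x => ?_
  by_cases hx : x ∈ range e
  · obtain ⟨a, rfl⟩ := hx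
    refine EMetric.tendsto_nhds.2 fun ε hε => ?_
    have hnear : ∀ᶠ z in 𝓝 (e a), ∀ b, e b = z → edist b a < ε :=
      eventually_comap.1 (he.isInducing.nhds_eq_comap a ▸ eball_mem_nhds a hε)
    have hout : ∀ᶠ z in 𝓝 (e a), z ∉ range e → infEDist a C = 0 := by
      by_cases ha : e a ∈ interior (range e)
      · filter_upwards [mem_interior_iff_mem_nhds.1 ha] with z hz hz' using absurd hz hz'
      · exact .of_forall fun _ _ => infEDist_zero_of_mem (hC a ha)
    filter_upwards [hnear, hout] with z hz hz'
    rw [collapseMap_apply he.injective]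
    by_cases hzr : z ∈ range e
    · obtain ⟨b, rfl⟩ := hzr
      rw [collapseMap_apply he.injective, edist_of_of]
      exact (min_le_left _ _).trans_lt (hz b rfl)
    · rw [collapseMap_of_notMem_range hzr, edist_base_of, hz' hzr]
      exact hε
  · have : (fun _ => base) =ᶠ[𝓝 x] collapseMap e C := by
      filter_upwards [he.isClosed_range.isOpen_compl.mem_nhds hx] with z hz
      exact (collapseMap_of_notMem_range hz).symm
    exact continuousAt_const.congr this

end

section

variable {X : Type*} [TopologicalSpace X]

theorem pseudoMetrizableSpace_of_comap_nhds_le {ι : Type*} [Countable ι] {P : ι → Type*}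
    [∀ i, UniformSpace (P i)] [∀ i, IsCountablyGenerated (uniformity (P i))]
    (f : ∀ i, X → P i) (hf : ∀ i, Continuous (f i))
    (h : ∀ x, ∃ i, comap (f i) (𝓝 (f i x)) ≤ 𝓝 x) : PseudoMetrizableSpace X := by
  refine IsInducing.pseudoMetrizableSpace (f := fun x i => f i x)
    (isInducing_iff_nhds.2 fun x => ?_)
  rw [nhds_pi, Filter.pi, comap_iInf]
  simp_rw [comap_comap]
  obtain ⟨i, hi⟩ := h x
  exact le_antisymm (le_iInf fun i => ((hf i).tendsto x).le_comap) (iInf_le_of_le i hi)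

theorem t0Space_of_forall_exists_mem {ι : Type*} {S : ι → Set X} [∀ i, T0Space (S i)]
    (hS : ∀ x y, ∃ i, x ∈ S i ∧ y ∈ S i) : T0Space X :=
  (t0Space_iff_inseparable X).2 fun x y hxy => by
    obtain ⟨i, hx, hy⟩ := hS x y
    exact congrArg Subtype.val (Inseparable.eq (x := (⟨x, hx⟩ : S i)) (y := ⟨y, hy⟩)
      (IsInducing.subtypeVal.inseparable_iff.1 hxy))

theorem exists_mem_interior_of_forall_tendsto [FirstCountableTopology X] {S : ℕ → Set X}
    (hS : ∀ (u : ℕ → X) (x : X), Tendsto u atTop (𝓝 x) → ∃ k, ∀ n, u n ∈ S k) (x : X) :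
    ∃ k, x ∈ interior (S k) := by
  obtain ⟨V, hV⟩ := (𝓝 x).exists_antitone_basis
  by_contra! hx
  have : ∀ k, ∃ y ∈ V k, y ∉ S k := fun k => not_subset.1 fun hVS =>
    hx k (mem_interior_iff_mem_nhds.2 (mem_of_superset (hV.mem k) hVS))
  choose u huV huS using this
  obtain ⟨k, hk⟩ := hS u x (hV.tendsto huV)
  exact huS k (hk k)

end

theorem seq_absorbing_metrizable_pieces_metrizable_general
    {X : Type*} [TopologicalSpace X] [FirstCountableTopology X]
    (Xn : ℕ → Set X)
    (hclosed : ∀ n, IsClosed (Xn n))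
    (hmono : Monotone Xn)
    (habs : ∀ (u : ℕ → X) (x : X), Tendsto u atTop (𝓝 x) →
      ∃ k, ∀ n, u n ∈ Xn k)
    (hm : ∀ n, TopologicalSpace.MetrizableSpace (Xn n)) :
    TopologicalSpace.MetrizableSpace X := by
  have hint := exists_mem_interior_of_forall_tendsto habs
  have : T0Space X := t0Space_of_forall_exists_mem (S := Xn) fun x y =>
    let ⟨i, hi⟩ := hint x
    let ⟨j, hj⟩ := hint y
    ⟨max i j, hmono (le_max_left i j) (interior_subset hi),
      hmono (le_max_right i j) (interior_subset hj)⟩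
  let (k : ℕ) : MetricSpace (Xn k) := @metrizableSpaceMetric _ _ (hm k)
  let C (k : ℕ) : Set (Xn k) := (↑) ⁻¹' (interior (Xn k))ᶜ
  have : PseudoMetrizableSpace X := pseudoMetrizableSpace_of_comap_nhds_le
    (fun k => collapseMap ((↑) : Xn k → X) (C k))
    (fun k => continuous_collapseMap (hclosed k).isClosedEmbedding_subtypeVal (by simp [C]))
    fun x => by
      obtain ⟨k, hk⟩ := hint x
      exact ⟨k, comap_nhds_collapseMap_le (a := (⟨x, interior_subset hk⟩ : Xn k))
        IsEmbedding.subtypeVal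
        (isOpen_interior.preimage continuous_subtype_val).isClosed_compl (not_not_intro hk)⟩
  infer_instance

theorem seq_absorbing_metrizable_pieces_metrizable
    {X : Type*} [TopologicalSpace X] [FirstCountableTopology X]
    (Xn : ℕ → Set X)
    (hcover : (⋃ n, Xn n) = Set.univ)
    (hclosed : ∀ n, IsClosed (Xn n))
    (hmono : Monotone Xn)
    (habs : ∀ (u : ℕ → X) (x : X), Tendsto u atTop (𝓝 x) →
      ∃ k, ∀ n, u n ∈ Xn k)
    (hm : ∀ n, TopologicalSpace.MetrizableSpace (Xn n)) :
    TopologicalSpace.MetrizableSpace X :=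
  seq_absorbing_metrizable_pieces_metrizable_general Xn hclosed hmono habs hm
end

section
/- Let $(X_n : n \in \omega)$ be a sequentially absorbing covering of a first countable space $X$. Then every point $a \in X$ lies in the interior of some $X_n$. -/
open Filter Topology Set

theorem seq_absorbing_point_in_interior
    {X : Type*} [TopologicalSpace X] [FirstCountableTopology X]
    (Xn : ℕ → Set X)
    (hcover : (⋃ n, Xn n) = Set.univ)
    (hclosed : ∀ n, IsClosed (Xn n))
    (hmono : Monotone Xn)
    (habs : ∀ (u : ℕ → X) (x : X), Tendsto u atTop (𝓝 x) →
      ∃ k, ∀ n, u n ∈ Xn k) :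
    ∀ a : X, ∃ n, a ∈ interior (Xn n) := by
  intro a
  by_contra h
  push_neg at h
  obtain ⟨U, hU⟩ := (𝓝 a).exists_antitone_basis
  have hpick : ∀ n, ∃ x, x ∈ U n ∧ x ∉ Xn n := by
    intro n
    by_contra hc
    push_neg at hc
    exact h n (mem_interior_iff_mem_nhds.2
      (Filter.mem_of_superset (hU.mem n) hc))
  choose u hu1 hu2 using hpick
  have htend : Tendsto u atTop (𝓝 a) := by
    rw [hU.toHasBasis.tendsto_right_iff]
    intro i _
    filter_upwards [Filter.eventually_ge_atTop i] with n hn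
    exact hU.antitone hn (hu1 n)
  obtain ⟨k, hk⟩ := habs u a htend
  exact hu2 k (hk k)
end

section
/- Define $f : \mathbb{R} \to \mathbb{P}$ into the Niemytzki plane by $f(x) = (x,0)$. Then $f$ is a pointwise limit of continuous maps $f_n(x) = (x, 1/n)$ from $\mathbb{R}$ to $\mathbb{P}$, but $f$ is not $F_\sigma$-measurable: the set $F = \{(r,0) : r \in \mathbb{Q}\}$ is closed in $\mathbb{P}$ while $f^{-1}(F) = \mathbb{Q}$ is not a $G_\delta$-set in $\mathbb{R}$. -/
/-!
Balls off the axis and tangent discs meet the axis `y = 0` of the Niemytzki plane in at most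
their point of tangency, so the axis is closed and discrete and every set of axis points, in
particular the rational ones, is closed. Off the axis the topology is Euclidean, which gives
continuity of the `g n`, and the vertical points `(x, 1/(n+1))` eventually enter every tangent
disc at `(x, 0)`. Finally `ℚ` is not `Gδ` in `ℝ` by Baire: together with the irrationals it
would give two disjoint dense `Gδ` sets.
-/

open Filter Topology Set

/-- The carrier of the Niemytzki plane: the closed upper half-plane. -/
def Niemytzki : Type := { p : ℝ × ℝ // 0 ≤ p.2 }

/-- Euclidean open ball in the plane. -/
def euclBall (c : ℝ × ℝ) (r : ℝ) : Set (ℝ × ℝ) :=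
  { p | (p.1 - c.1) ^ 2 + (p.2 - c.2) ^ 2 < r ^ 2 }

/-- The Niemytzki (tangent disc) topology: interior points have Euclidean ball
neighborhoods, boundary points `(x,0)` have neighborhoods consisting of the point
together with an open ball tangent to the axis at `(x,0)`. -/
instance : TopologicalSpace Niemytzki :=
  TopologicalSpace.generateFrom
    ({ S | ∃ x y r : ℝ, 0 < y ∧ 0 < r ∧ r ≤ y ∧
        S = { p : Niemytzki | p.val ∈ euclBall (x, y) r } } ∪
     { S | ∃ x r : ℝ, 0 < r ∧
        S = insert ⟨(x, 0), le_refl 0⟩ { p : Niemytzki | p.val ∈ euclBall (x, r) r } })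

theorem isOpen_euclBall (c : ℝ × ℝ) (r : ℝ) : IsOpen (euclBall c r) :=
  isOpen_lt (by fun_prop) continuous_const

theorem abs_snd_sub_lt_of_mem_euclBall {c p : ℝ × ℝ} {r : ℝ} (hp : p ∈ euclBall c r) :
    |p.2 - c.2| < |r| :=
  sq_lt_sq.mp <| by
    have : (p.1 - c.1) ^ 2 + (p.2 - c.2) ^ 2 < r ^ 2 := hp
    nlinarith [sq_nonneg (p.1 - c.1)]

theorem mk_mem_euclBall_tangent {x t r : ℝ} (ht : 0 < t) (htr : t < 2 * r) :
    (x, t) ∈ euclBall (x, r) r := by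
  show (x - x) ^ 2 + (t - r) ^ 2 < r ^ 2
  nlinarith

theorem not_isGδ_range_ratCast : ¬ IsGδ (range ((↑) : ℚ → ℝ)) := fun hGδ => by
  have hrat : ∀ᶠ x in residual ℝ, x ∈ range ((↑) : ℚ → ℝ) :=
    residual_of_dense_Gδ hGδ Rat.denseRange_cast
  obtain ⟨x, hx, hirr⟩ := (dense_of_mem_residual (hrat.and eventually_residual_irrational)).nonempty
  exact hirr hx

theorem notMem_euclBall_of_snd_eq_zero {p : ℝ × ℝ} (hp : p.2 = 0) {x y r : ℝ} (hr : 0 < r)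
    (hry : r ≤ y) : p ∉ euclBall (x, y) r := fun hmem => by
  have := abs_snd_sub_lt_of_mem_euclBall hmem
  rw [hp, abs_of_pos hr, zero_sub, abs_neg, abs_of_pos (hr.trans_le hry)] at this
  exact this.not_ge hry

namespace Niemytzki

theorem isOpen_ball {x y r : ℝ} (hr : 0 < r) (hry : r ≤ y) :
    IsOpen { p : Niemytzki | p.val ∈ euclBall (x, y) r } :=
  TopologicalSpace.isOpen_generateFrom_of_mem (Or.inl ⟨x, y, r, hr.trans_le hry, hr, hry, rfl⟩)

theorem isOpen_tangentDisc {x r : ℝ} (hr : 0 < r) :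
    IsOpen (insert ⟨(x, 0), le_refl 0⟩ { p : Niemytzki | p.val ∈ euclBall (x, r) r }) :=
  TopologicalSpace.isOpen_generateFrom_of_mem (Or.inr ⟨x, r, hr, rfl⟩)

theorem exists_isOpen_forall_snd_eq_zero (p : Niemytzki) :
    ∃ U : Set Niemytzki, IsOpen U ∧ p ∈ U ∧ ∀ q ∈ U, q.val.2 = 0 → q = p := by
  rcases p.property.eq_or_lt with hp0 | hp
  · have hp : (⟨(p.val.1, 0), le_refl 0⟩ : Niemytzki) = p := Subtype.ext (Prod.ext rfl hp0)
    refine ⟨_, isOpen_tangentDisc (x := p.val.1) one_pos, Or.inl hp.symm, ?_⟩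
    rintro q (rfl | hq) hq0
    · exact hp
    · exact absurd hq (notMem_euclBall_of_snd_eq_zero hq0 one_pos le_rfl)
  · refine ⟨_, isOpen_ball (x := p.val.1) hp le_rfl, ?_, fun q hq hq0 => ?_⟩
    · show (p.val.1 - p.val.1) ^ 2 + (p.val.2 - p.val.2) ^ 2 < p.val.2 ^ 2
      nlinarith
    · exact absurd hq (notMem_euclBall_of_snd_eq_zero hq0 hp le_rfl)

theorem isClosed_of_forall_snd_eq_zero {S : Set Niemytzki} (hS : ∀ p ∈ S, p.val.2 = 0) :
    IsClosed S := by
  refine isOpen_compl_iff.mp (isOpen_iff_forall_mem_open.mpr fun p hp => ?_)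
  obtain ⟨U, hU, hpU, hUaxis⟩ := exists_isOpen_forall_snd_eq_zero p
  exact ⟨U, fun q hqU hqS => hp (hUaxis q hqU (hS q hqS) ▸ hqS), hU, hpU⟩

theorem continuous_of_continuous_val {X : Type*} [TopologicalSpace X] {φ : X → Niemytzki}
    (hφ : Continuous fun a => (φ a).val) (hpos : ∀ a, 0 < (φ a).val.2) : Continuous φ := by
  refine continuous_generateFrom_iff.mpr ?_
  rintro S (⟨x, y, r, -, -, -, rfl⟩ | ⟨x, r, -, rfl⟩)
  · exact (isOpen_euclBall _ _).preimage hφ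
  · convert (isOpen_euclBall (x, r) r).preimage hφ using 1
    ext a
    exact or_iff_right fun ha => (hpos a).ne' (congrArg (·.val.2) ha)

theorem tendsto_nhds_axis_of_vertical {α : Type*} {l : Filter α} {φ : α → Niemytzki} {x : ℝ}
    {t : α → ℝ} (hφ : ∀ a, (φ a).val = (x, t a)) (ht : Tendsto t l (𝓝 0)) :
    Tendsto φ l (𝓝 ⟨(x, 0), le_refl 0⟩) := by
  refine TopologicalSpace.tendsto_nhds_generateFrom_iff.mpr ?_
  rintro S (⟨cx, cy, r, -, hr, hry, rfl⟩ | ⟨cx, r, hr, rfl⟩) hxS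
  · exact absurd hxS (notMem_euclBall_of_snd_eq_zero rfl hr hry)
  · obtain rfl : x = cx := by
      rcases hxS with h | h
      · exact congrArg (·.val.1) h
      · exact absurd h (notMem_euclBall_of_snd_eq_zero rfl hr le_rfl)
    filter_upwards [ht.eventually_lt_const (by linarith : (0 : ℝ) < 2 * r)] with a hta
    have ht₀ : 0 ≤ t a := by simpa [hφ a] using (φ a).property
    rcases ht₀.eq_or_lt with h0 | hpos
    · exact Or.inl (Subtype.ext (by rw [hφ a, ← h0]))
    · refine Or.inr (show (φ a).val ∈ euclBall (x, r) r from ?_)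
      rw [hφ a]
      exact mk_mem_euclBall_tangent hpos hta

end Niemytzki

theorem niemytzki_baire_one_not_Fsigma_measurable
    (f : ℝ → Niemytzki) (hf : ∀ x, f x = ⟨(x, 0), le_refl 0⟩)
    (g : ℕ → ℝ → Niemytzki)
    (hg : ∀ n x, g n x = ⟨(x, 1 / (n + 1)), by positivity⟩) :
    (∀ n, Continuous (g n)) ∧
    (∀ x, Tendsto (fun n => g n x) atTop (𝓝 (f x))) ∧
    IsClosed { p : Niemytzki | p.val.2 = 0 ∧ ∃ q : ℚ, p.val.1 = (q : ℝ) } ∧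
    f ⁻¹' { p : Niemytzki | p.val.2 = 0 ∧ ∃ q : ℚ, p.val.1 = (q : ℝ) }
      = Set.range ((↑) : ℚ → ℝ) ∧
    ¬ IsGδ (Set.range ((↑) : ℚ → ℝ)) := by
  refine ⟨fun n => ?_, fun x => ?_, Niemytzki.isClosed_of_forall_snd_eq_zero fun _ hp => hp.1,
    ?_, not_isGδ_range_ratCast⟩
  · refine Niemytzki.continuous_of_continuous_val ?_ fun x => by rw [hg]; positivity
    simp only [hg]
    fun_prop
  · rw [hf x]
    exact Niemytzki.tendsto_nhds_axis_of_vertical (fun n => by rw [hg])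
      tendsto_one_div_add_atTop_nhds_zero_nat
  · ext x
    simp [hf x, eq_comm]
end

section
/- Let $X$ be a topological space, $Y$ a perfect topological space (every closed subset of $Y$ is $G_\delta$), and $f : X \to Y$ a barely continuous map, i.e., for every nonempty closed set $F \subseteq X$ the restriction $f|_F$ has a point of continuity. Then for every closed set $F \subseteq Y$, the set $f^{-1}(F)$ is a countable intersection of $H$-sets of $X$; equivalently, $f$ is $H_\sigma$-measurable. -/
open Filter Topology Set

/-- `A` is an `H`-set (resolvable in the sense of Hausdorff): for every closed
`F`, the set `closure (F ∩ A) ∩ closure (F \ A)` is nowhere dense in the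
subspace `F`. -/
def HSet {X : Type*} [TopologicalSpace X] (A : Set X) : Prop :=
  ∀ F : Set X, IsClosed F →
    IsNowhereDense
      ((Subtype.val ⁻¹' (closure (F ∩ A) ∩ closure (F \ A))) : Set F)

/-- `f` is barely continuous: its restriction to every nonempty closed set has
a point of continuity. -/
def BarelyContinuous {X Y : Type*} [TopologicalSpace X] [TopologicalSpace Y]
    (f : X → Y) : Prop :=
  ∀ F : Set X, IsClosed F → F.Nonempty → ∃ x ∈ F, ContinuousWithinAt f F x

universe u v

section Aux

variable {X : Type u} {Y : Type v} [TopologicalSpace X]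

/-- Union of all open sets whose trace on `S` is mapped into `W` by `f`. -/
def goodOpen (f : X → Y) (W : Set Y) (S : Set X) : Set X :=
  ⋃₀ {U | IsOpen U ∧ f '' (U ∩ S) ⊆ W}

lemma isOpen_goodOpen (f : X → Y) (W : Set Y) (S : Set X) : IsOpen (goodOpen f W S) :=
  isOpen_sUnion fun _ hU => hU.1

/-- The derivative of `S`: remove all points having a relative neighborhood mapped
into `V` or into `Kᶜ`. -/
def drv (f : X → Y) (K V : Set Y) (S : Set X) : Set X :=
  S \ (goodOpen f V S ∪ goodOpen f Kᶜ S)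

lemma isClosed_drv (f : X → Y) (K V : Set Y) {S : Set X} (hS : IsClosed S) :
    IsClosed (drv f K V S) :=
  hS.sdiff ((isOpen_goodOpen f V S).union (isOpen_goodOpen f Kᶜ S))

/-- Transfinite iteration of the derivative. -/
noncomputable def itr (f : X → Y) (K V : Set Y) (α : Ordinal.{u}) : Set X :=
  ⋂ β : {β : Ordinal.{u} // β < α}, drv f K V (itr f K V β.1)
termination_by α
decreasing_by exact β.2

lemma mem_itr {f : X → Y} {K V : Set Y} {α : Ordinal.{u}} {x : X} :
    x ∈ itr f K V α ↔ ∀ β < α, x ∈ drv f K V (itr f K V β) := by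
  rw [itr]
  simp [Set.mem_iInter, Subtype.forall]

lemma itr_subset_drv {f : X → Y} {K V : Set Y} {β α : Ordinal.{u}} (h : β < α) :
    itr f K V α ⊆ drv f K V (itr f K V β) := fun _ hx => mem_itr.1 hx β h

lemma isClosed_itr (f : X → Y) (K V : Set Y) (α : Ordinal.{u}) :
    IsClosed (itr f K V α) := by
  induction α using Ordinal.induction with
  | h α ih =>
    rw [itr]
    exact isClosed_iInter fun β => isClosed_drv f K V (ih β.1 β.2)

lemma stage_unique {f : X → Y} {K V : Set Y} {γ γ' : Ordinal.{u}} {x : X}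
    (h1 : x ∈ itr f K V γ) (h1' : x ∉ drv f K V (itr f K V γ))
    (h2 : x ∈ itr f K V γ') (h2' : x ∉ drv f K V (itr f K V γ')) : γ = γ' := by
  by_contra hne
  rcases lt_or_gt_of_ne hne with h | h
  · exact h1' (itr_subset_drv h h2)
  · exact h2' (itr_subset_drv h h1)

lemma exists_itr_empty [TopologicalSpace Y] {f : X → Y} {K V : Set Y}
    (hf : BarelyContinuous f) (hK : IsClosed K) (hV : IsOpen V) (hKV : K ⊆ V) :
    ∃ α : Ordinal.{u}, itr f K V α = ∅ := by
  by_contra h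
  push_neg at h
  have key : ∀ α : Ordinal.{u}, ∃ x, x ∈ itr f K V α ∧ x ∉ drv f K V (itr f K V α) := by
    intro α
    obtain ⟨x, hx, hc⟩ := hf _ (isClosed_itr f K V α) (h α)
    refine ⟨x, hx, ?_⟩
    have hcases : (f x ∈ V ∧ IsOpen V) ∨ (f x ∈ Kᶜ ∧ IsOpen Kᶜ) := by
      by_cases hfx : f x ∈ K
      · exact Or.inl ⟨hKV hfx, hV⟩
      · exact Or.inr ⟨hfx, hK.isOpen_compl⟩
    rcases hcases with ⟨hfx, hW⟩ | ⟨hfx, hW⟩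
    · have hmem : f ⁻¹' V ∈ 𝓝[itr f K V α] x := hc (hW.mem_nhds hfx)
      rw [mem_nhdsWithin] at hmem
      obtain ⟨U, hUo, hxU, hUsub⟩ := hmem
      intro hd
      exact hd.2 (Or.inl ⟨U, ⟨hUo, by rintro y ⟨z, hz, rfl⟩; exact hUsub hz⟩, hxU⟩)
    · have hmem : f ⁻¹' Kᶜ ∈ 𝓝[itr f K V α] x := hc (hW.mem_nhds hfx)
      rw [mem_nhdsWithin] at hmem
      obtain ⟨U, hUo, hxU, hUsub⟩ := hmem
      intro hd
      exact hd.2 (Or.inr ⟨U, ⟨hUo, by rintro y ⟨z, hz, rfl⟩; exact hUsub hz⟩, hxU⟩)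
  refine not_injective_of_ordinal (itr f K V) ?_
  intro α β hαβ
  by_contra hne
  rcases lt_or_gt_of_ne hne with hlt | hlt
  · obtain ⟨x, hx, hxd⟩ := key α
    exact hxd (itr_subset_drv hlt (hαβ ▸ hx))
  · obtain ⟨x, hx, hxd⟩ := key β
    exact hxd (itr_subset_drv hlt (hαβ ▸ hx))

/-- For a nonempty set `F`, there is a stage `β` such that `F ⊆ itr β` and some point
of `F` is removed at stage `β`. -/
lemma exists_stage_subset {f : X → Y} {K V : Set Y} {F : Set X} (hne : F.Nonempty)
    {α₀ : Ordinal.{u}} (hemp : itr f K V α₀ = ∅) :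
    ∃ β : Ordinal.{u}, F ⊆ itr f K V β ∧ ∃ x ∈ F, x ∉ drv f K V (itr f K V β) := by
  have hS : {β : Ordinal.{u} | ¬ F ⊆ itr f K V β}.Nonempty := by
    refine ⟨α₀, ?_⟩
    simp only [Set.mem_setOf_eq, hemp, subset_empty_iff]
    exact hne.ne_empty
  set γ₁ := wellFounded_lt.min _ hS with hγ₁
  have hmem := wellFounded_lt.min_mem _ hS
  rw [Set.mem_setOf_eq, Set.not_subset] at hmem
  obtain ⟨x, hxF, hxγ⟩ := hmem
  rw [mem_itr] at hxγ
  push_neg at hxγ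
  obtain ⟨β, hβlt, hxd⟩ := hxγ
  have hFβ : F ⊆ itr f K V β := by
    by_contra hc
    exact wellFounded_lt.not_lt_min _ hc hβlt
  exact ⟨β, hFβ, x, hxF, hxd⟩

/-- A set that is "piecewise decided" on every nonempty closed set is an `H`-set. -/
lemma piecewise_hset {A : Set X}
    (h : ∀ F : Set X, IsClosed F → F.Nonempty →
      ∃ U, IsOpen U ∧ (U ∩ F).Nonempty ∧ (U ∩ F ⊆ A ∨ (U ∩ F) ∩ A = ∅)) :
    HSet A := by
  intro F hF
  set G := closure (F ∩ A) ∩ closure (F \ A) with hG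
  have hGc : IsClosed ((Subtype.val ⁻¹' G : Set F)) :=
    (isClosed_closure.inter isClosed_closure).preimage continuous_subtype_val
  rw [hGc.isNowhereDense_iff]
  by_contra hne
  rw [← Ne, ← nonempty_iff_ne_empty] at hne
  obtain ⟨⟨x, hxF⟩, hx⟩ := hne
  obtain ⟨O, hOo, hOeq⟩ := isOpen_induced_iff.1
    (isOpen_interior (s := (Subtype.val ⁻¹' G : Set F)))
  have hxO : x ∈ O := by
    have : (⟨x, hxF⟩ : F) ∈ Subtype.val ⁻¹' O := hOeq ▸ hx
    exact this
  have key : ∀ y ∈ O ∩ F, y ∈ G := by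
    rintro y ⟨h1, h2⟩
    have : (⟨y, h2⟩ : F) ∈ interior (Subtype.val ⁻¹' G : Set F) := by
      rw [← hOeq]; exact h1
    have h3 : (⟨y, h2⟩ : F) ∈ (Subtype.val ⁻¹' G : Set F) := interior_subset this
    exact h3
  have hF''ne : (closure (O ∩ F)).Nonempty := ⟨x, subset_closure ⟨hxO, hxF⟩⟩
  obtain ⟨U, hUo, hUne, hUcase⟩ := h (closure (O ∩ F)) isClosed_closure hF''ne
  have hz : (U ∩ (O ∩ F)).Nonempty := by
    obtain ⟨z, hzU, hzF''⟩ := hUne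
    exact mem_closure_iff.1 hzF'' U hUo hzU
  obtain ⟨z, hzU, hzO, hzF⟩ := hz
  have hzG := key z ⟨hzO, hzF⟩
  rcases hUcase with hsub | hdisj
  · obtain ⟨w, ⟨hwU, hwO⟩, hwF, hwA⟩ :=
      mem_closure_iff.1 hzG.2 (U ∩ O) (hUo.inter hOo) ⟨hzU, hzO⟩
    exact hwA (hsub ⟨hwU, subset_closure ⟨hwO, hwF⟩⟩)
  · obtain ⟨w, ⟨hwU, hwO⟩, hwF, hwA⟩ :=
      mem_closure_iff.1 hzG.1 (U ∩ O) (hUo.inter hOo) ⟨hzU, hzO⟩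
    have hw : w ∈ (U ∩ closure (O ∩ F)) ∩ A := ⟨⟨hwU, subset_closure ⟨hwO, hwF⟩⟩, hwA⟩
    rw [hdisj] at hw
    exact hw

/-- The key sandwich lemma: between the preimage of a closed set `K` and the preimage
of an open set `V ⊇ K` there is an `H`-set. -/
lemma sandwich [TopologicalSpace Y] {f : X → Y} {K V : Set Y}
    (hf : BarelyContinuous f) (hK : IsClosed K) (hV : IsOpen V) (hKV : K ⊆ V) :
    ∃ B : Set X, HSet B ∧ f ⁻¹' K ⊆ B ∧ B ⊆ f ⁻¹' V := by
  obtain ⟨α₀, hα₀⟩ := exists_itr_empty hf hK hV hKV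
  set B : Set X := {x | ∀ γ : Ordinal.{u},
    x ∈ itr f K V γ → x ∉ drv f K V (itr f K V γ) → x ∈ goodOpen f V (itr f K V γ)} with hB
  have hremoved : ∀ (γ : Ordinal.{u}) (x : X), x ∈ itr f K V γ →
      x ∉ drv f K V (itr f K V γ) →
      ∃ U, IsOpen U ∧ x ∈ U ∧ ∀ y ∈ U ∩ itr f K V γ, y ∉ drv f K V (itr f K V γ) := by
    intro γ x hx hxd
    have hg : x ∈ goodOpen f V (itr f K V γ) ∪ goodOpen f Kᶜ (itr f K V γ) := by
      by_contra hg
      exact hxd ⟨hx, hg⟩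
    rcases hg with ⟨U, ⟨hUo, hUim⟩, hxU⟩ | ⟨U, ⟨hUo, hUim⟩, hxU⟩
    · exact ⟨U, hUo, hxU, fun y hy hyd => hyd.2 (Or.inl ⟨U, ⟨hUo, hUim⟩, hy.1⟩)⟩
    · exact ⟨U, hUo, hxU, fun y hy hyd => hyd.2 (Or.inr ⟨U, ⟨hUo, hUim⟩, hy.1⟩)⟩
  refine ⟨B, ?_, ?_, ?_⟩
  · apply piecewise_hset
    intro F hFc hFne
    obtain ⟨β, hFsub, x, hxF, hxd⟩ := exists_stage_subset hFne hα₀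
    obtain ⟨U, hUo, hxU, hrem⟩ := hremoved β x (hFsub hxF) hxd
    set O := goodOpen f V (itr f K V β) with hO
    by_cases hcase : ((U ∩ O) ∩ F).Nonempty
    · refine ⟨U ∩ O, hUo.inter (isOpen_goodOpen f V _), hcase, Or.inl ?_⟩
      rintro y ⟨⟨hyU, hyO⟩, hyF⟩
      intro γ hyγ hyd
      have hyβ : y ∈ itr f K V β := hFsub hyF
      have hydβ : y ∉ drv f K V (itr f K V β) := hrem y ⟨hyU, hyβ⟩
      have : γ = β := stage_unique hyγ hyd hyβ hydβ
      rw [this]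
      exact hyO
    · refine ⟨U, hUo, ⟨x, hxU, hxF⟩, Or.inr ?_⟩
      rw [Set.eq_empty_iff_forall_notMem]
      rintro y ⟨⟨hyU, hyF⟩, hyB⟩
      have hyβ : y ∈ itr f K V β := hFsub hyF
      have hydβ : y ∉ drv f K V (itr f K V β) := hrem y ⟨hyU, hyβ⟩
      exact hcase ⟨y, ⟨hyU, hyB β hyβ hydβ⟩, hyF⟩
  · intro x hx
    intro γ hxγ hxd
    have hg : x ∈ goodOpen f V (itr f K V γ) ∪ goodOpen f Kᶜ (itr f K V γ) := by
      by_contra hg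
      exact hxd ⟨hxγ, hg⟩
    rcases hg with h | ⟨U, ⟨hUo, hUim⟩, hxU⟩
    · exact h
    · exact absurd (hUim ⟨x, ⟨hxU, hxγ⟩, rfl⟩) (not_not_intro hx)
  · intro x hx
    obtain ⟨β, hsub, y, hy, hyd⟩ :=
      exists_stage_subset (F := {x}) (Set.singleton_nonempty x) hα₀
    rw [Set.mem_singleton_iff] at hy
    rw [hy] at hyd
    have hxβ : x ∈ itr f K V β := hsub rfl
    obtain ⟨U, ⟨hUo, hUim⟩, hxU⟩ := hx β hxβ hyd
    exact hUim ⟨x, ⟨hxU, hxβ⟩, rfl⟩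

end Aux

theorem barelyContinuous_Hsigma_measurable
    {X Y : Type*} [TopologicalSpace X] [TopologicalSpace Y]
    (hY : ∀ F : Set Y, IsClosed F → IsGδ F)
    (f : X → Y) (hf : BarelyContinuous f) :
    (∀ F : Set Y, IsClosed F →
      ∃ B : ℕ → Set X, (∀ n, HSet (B n)) ∧ f ⁻¹' F = ⋂ n, B n) ∧
    (∀ V : Set Y, IsOpen V →
      ∃ B : ℕ → Set X, (∀ n, HSet (B n)) ∧ f ⁻¹' V = ⋃ n, B n) := by
  constructor
  · intro F hF
    obtain ⟨V, hVo, hVeq⟩ := isGδ_iff_eq_iInter_nat.1 (hY F hF)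
    have hFV : ∀ n, F ⊆ V n := fun n => hVeq ▸ Set.iInter_subset V n
    choose B hB1 hB2 hB3 using fun n => sandwich hf hF (hVo n) (hFV n)
    refine ⟨B, hB1, ?_⟩
    apply Set.Subset.antisymm
    · exact Set.subset_iInter fun n => hB2 n
    · intro x hx
      rw [Set.mem_preimage, hVeq, Set.mem_iInter]
      intro n
      exact hB3 n (Set.mem_iInter.1 hx n)
  · intro V hV
    obtain ⟨W, hWo, hWeq⟩ := isGδ_iff_eq_iInter_nat.1 (hY Vᶜ hV.isClosed_compl)
    have h1 : ∀ n, Vᶜ ⊆ W n := by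
      intro n
      rw [hWeq]
      exact Set.iInter_subset W n
    have hKV : ∀ n, (W n)ᶜ ⊆ V := fun n => compl_subset_comm.mpr (h1 n)
    have hKcl : ∀ n, IsClosed (W n)ᶜ := fun n => (hWo n).isClosed_compl
    choose B hB1 hB2 hB3 using fun n => sandwich hf (hKcl n) hV (hKV n)
    refine ⟨B, hB1, ?_⟩
    apply Set.Subset.antisymm
    · intro x hx
      have hnc : f x ∉ Vᶜ := fun h => h hx
      rw [hWeq, Set.mem_iInter] at hnc
      push_neg at hnc
      obtain ⟨n, hn⟩ := hnc
      exact Set.mem_iUnion.2 ⟨n, hB2 n hn⟩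
    · intro x hx
      obtain ⟨n, hn⟩ := Set.mem_iUnion.1 hx
      exact hB3 n hn
end

section
/- Let $f : X \to Y$ be barely continuous, let $F, F' \subseteq Y$ be disjoint closed sets. Then there exists an $H$-set $B \subseteq X$ with $f^{-1}(F) \subseteq B \subseteq X \setminus f^{-1}(F')$. -/
open Filter Topology Set

/-!
Iterate the derivative `d A = cl (A ∩ E) ∩ cl (A ∩ H)` transfinitely, starting from the whole
space, for `E = f⁻¹ F` and `H = f⁻¹ F'`. At a point of continuity `x` of `f` on a nonempty closed
`A`, `f x` misses one of the closed sets `F`, `F'`, so `x` is not a limit of `A ∩ E` or not a limit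
of `A ∩ H`: every stage loses a point and the iteration dies out. Each `x` then gets a rank, the
stage `A` at which `x ∉ d A`, and `x` is put into `B` unless it is a limit of `A ∩ H`. Given a set
`F` and an open `U` meeting it, look at the minimal rank `γ` on `F ∩ U`: either some point of
`F ∩ U` is not a limit of `A_γ ∩ H`, and then all of `F` near it lies in `B`, or every point is,
and then all of `F` near a point of rank `γ` has rank `γ` and lies outside `B`. Either way the
boundary of `B` relative to `F` is nowhere dense in `F`.
-/

universe u

noncomputable def transfiniteIter {X : Type u} (d : Set X → Set X) : Ordinal.{u} → Set X
  | o => ⋂ p : Iio o, d (transfiniteIter d p.1)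
termination_by o => o
decreasing_by exact p.2

namespace transfiniteIter

variable {X : Type u} (d : Set X → Set X)

theorem mem_iff {o : Ordinal.{u}} {x : X} :
    x ∈ transfiniteIter d o ↔ ∀ p < o, x ∈ d (transfiniteIter d p) := by
  rw [transfiniteIter]
  simp

theorem antitone : Antitone (transfiniteIter d) :=
  fun _ _ hoo' _ hx => (mem_iff d).2 fun p hp => (mem_iff d).1 hx p (hp.trans_le hoo')

theorem succ_subset (o : Ordinal.{u}) : transfiniteIter d (o + 1) ⊆ d (transfiniteIter d o) :=
  fun _ hx => (mem_iff d).1 hx o (Order.lt_succ o)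

theorem isClosed [TopologicalSpace X] (hd : ∀ A, IsClosed (d A)) (o : Ordinal.{u}) :
    IsClosed (transfiniteIter d o) := by
  rw [transfiniteIter]
  exact isClosed_iInter fun _ => hd _

/-- An iteration that shrinks strictly at every nonempty stage reaches `∅`, since there is no
injection of the ordinals into `Set X`. -/
theorem exists_eq_empty
    (h : ∀ o, (transfiniteIter d o).Nonempty → ¬ transfiniteIter d o ⊆ d (transfiniteIter d o)) :
    ∃ o, transfiniteIter d o = ∅ := by
  by_contra! hne
  have hanti : StrictAnti (transfiniteIter d) := fun o o' hoo' =>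
    calc transfiniteIter d o' ≤ transfiniteIter d (o + 1) := antitone d (Order.succ_le_of_lt hoo')
      _ < transfiniteIter d o := (antitone d (Order.le_succ o)).lt_of_not_ge
          fun hsub => h o (hne o) (hsub.trans (succ_subset d o))
  exact not_injective_of_ordinal _ hanti.injective

/-- The stage at which `x` drops out of the iteration (junk value `0` if it never does). -/
noncomputable def rank (x : X) : Ordinal.{u} := sInf {p | x ∉ d (transfiniteIter d p)}

theorem mem_of_lt_rank {x : X} {p : Ordinal.{u}} (hp : p < rank d x) :
    x ∈ d (transfiniteIter d p) :=
  not_not.1 (notMem_of_lt_csInf' hp)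

theorem mem_rank (x : X) : x ∈ transfiniteIter d (rank d x) :=
  (mem_iff d).2 fun _ => mem_of_lt_rank d

theorem notMem_rank {o : Ordinal.{u}} (ho : transfiniteIter d o = ∅) (x : X) :
    x ∉ d (transfiniteIter d (rank d x)) := by
  have hx : x ∉ transfiniteIter d o := ho ▸ notMem_empty x
  obtain ⟨p, -, hp⟩ := not_forall₂.1 (mt (mem_iff d).2 hx)
  exact csInf_mem (s := {p | x ∉ d (transfiniteIter d p)}) ⟨p, hp⟩

end transfiniteIter

section Separation

variable {X : Type u} [TopologicalSpace X]

theorem isNowhereDense_preimage_val {F R : Set X} (hR : IsClosed R)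
    (h : ∀ U, IsOpen U → (F ∩ U).Nonempty → ∃ x ∈ F ∩ U, x ∉ R) :
    IsNowhereDense (Subtype.val ⁻¹' R : Set F) := by
  rw [(hR.preimage continuous_subtype_val).isNowhereDense_iff, eq_empty_iff_forall_notMem]
  intro x hx
  obtain ⟨t, htR, ht, hxt⟩ := mem_interior.1 hx
  obtain ⟨U, hU, rfl⟩ := isOpen_induced_iff.1 ht
  obtain ⟨w, ⟨hwF, hwU⟩, hwR⟩ := h U hU ⟨x, x.2, hxt⟩
  exact hwR (htR (show (⟨w, hwF⟩ : F) ∈ Subtype.val ⁻¹' U from hwU))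

variable (E H : Set X)

def sepDeriv (A : Set X) : Set X := closure (A ∩ E) ∩ closure (A ∩ H)

theorem isClosed_sepDeriv (A : Set X) : IsClosed (sepDeriv E H A) :=
  isClosed_closure.inter isClosed_closure

def sepSet : Set X :=
  {x | x ∉ closure (transfiniteIter (sepDeriv E H) (transfiniteIter.rank (sepDeriv E H) x) ∩ H)}

open transfiniteIter

variable {E H}

theorem sepSet_subset_compl : sepSet E H ⊆ Hᶜ := fun x hx hxH =>
  hx (subset_closure ⟨mem_rank _ x, hxH⟩)

theorem subset_sepSet {o : Ordinal.{u}} (ho : transfiniteIter (sepDeriv E H) o = ∅) :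
    E ⊆ sepSet E H := fun x hxE hxH =>
  notMem_rank _ ho x ⟨subset_closure ⟨mem_rank _ x, hxE⟩, hxH⟩

theorem exists_notMem_closure_inter_closure_diff_sepSet {o : Ordinal.{u}}
    (ho : transfiniteIter (sepDeriv E H) o = ∅) (F : Set X) {U : Set X} (hU : IsOpen U)
    (hne : (F ∩ U).Nonempty) :
    ∃ w ∈ F ∩ U, w ∉ closure (F ∩ sepSet E H) ∩ closure (F \ sepSet E H) := by
  set T := transfiniteIter (sepDeriv E H)
  set r := rank (sepDeriv E H)
  set w₀ := Function.argminOn r (F ∩ U) hne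
  have hw₀ : w₀ ∈ F ∩ U := Function.argminOn_mem r _ hne
  have hmin : ∀ z ∈ F ∩ U, r w₀ ≤ r z := fun z hz => Function.argminOn_le r _ hz
  by_cases hlimH : ∃ w ∈ F ∩ U, w ∉ closure (T (r w₀) ∩ H)
  · obtain ⟨w, hw, hwH⟩ := hlimH
    have hV : Disjoint (U ∩ (closure (T (r w₀) ∩ H))ᶜ) (F \ sepSet E H) := by
      refine disjoint_left.2 fun z ⟨hzU, hzH⟩ ⟨hzF, hzB⟩ => hzB fun hz => hzH ?_
      exact closure_mono (inter_subset_inter_left _ (antitone _ (hmin z ⟨hzF, hzU⟩))) hz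
    refine ⟨w, hw, fun hwR => ?_⟩
    exact disjoint_left.1 (hV.closure_right (hU.inter isClosed_closure.isOpen_compl))
      ⟨hw.2, hwH⟩ hwR.2
  · push Not at hlimH
    have hw₀E : w₀ ∉ closure (T (r w₀) ∩ E) := fun h => notMem_rank _ ho w₀ ⟨h, hlimH w₀ hw₀⟩
    have hV : Disjoint (U ∩ (closure (T (r w₀) ∩ E))ᶜ) (F ∩ sepSet E H) := by
      refine disjoint_left.2 fun z ⟨hzU, hzE⟩ ⟨hzF, hzB⟩ => ?_
      have hrz : r z = r w₀ :=
        le_antisymm (not_lt.1 fun h => hzE (mem_of_lt_rank _ h).1) (hmin z ⟨hzF, hzU⟩)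
      have hzH : z ∉ closure (T (r z) ∩ H) := hzB
      exact hzH (hrz ▸ hlimH z ⟨hzF, hzU⟩)
    refine ⟨w₀, hw₀, fun hwR => ?_⟩
    exact disjoint_left.1 (hV.closure_right (hU.inter isClosed_closure.isOpen_compl))
      ⟨hw₀.2, hw₀E⟩ hwR.1

theorem hSet_sepSet {o : Ordinal.{u}} (ho : transfiniteIter (sepDeriv E H) o = ∅) :
    HSet (sepSet E H) := fun F _ =>
  isNowhereDense_preimage_val (isClosed_sepDeriv _ _ _) fun _ hU hne =>
    exists_notMem_closure_inter_closure_diff_sepSet ho F hU hne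

theorem exists_hSet_of_forall_exists_notMem_sepDeriv
    (h : ∀ A, IsClosed A → A.Nonempty → ∃ x ∈ A, x ∉ sepDeriv E H A) :
    ∃ B : Set X, HSet B ∧ E ⊆ B ∧ B ⊆ Hᶜ := by
  obtain ⟨o, ho⟩ := exists_eq_empty (sepDeriv E H) fun o hne hsub => by
    obtain ⟨x, hx, hxd⟩ := h _ (isClosed _ (isClosed_sepDeriv E H) o) hne
    exact hxd (hsub hx)
  exact ⟨sepSet E H, hSet_sepSet ho, subset_sepSet ho, sepSet_subset_compl⟩

end Separation

theorem ContinuousWithinAt.mem_of_mem_closure_inter_preimage {X Y : Type*} [TopologicalSpace X]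
    [TopologicalSpace Y] {f : X → Y} {A : Set X} {F : Set Y} {x : X}
    (hf : ContinuousWithinAt f A x) (hF : IsClosed F) (hx : x ∈ closure (A ∩ f ⁻¹' F)) :
    f x ∈ F :=
  hF.closure_subset ((hf.mono inter_subset_left).mem_closure hx fun _ hy => hy.2)

theorem BarelyContinuous.exists_notMem_sepDeriv {X : Type u} {Y : Type*} [TopologicalSpace X]
    [TopologicalSpace Y] {f : X → Y} (hf : BarelyContinuous f) {F F' : Set Y} (hF : IsClosed F)
    (hF' : IsClosed F') (hdisj : Disjoint F F') {A : Set X} (hA : IsClosed A) (hne : A.Nonempty) :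
    ∃ x ∈ A, x ∉ sepDeriv (f ⁻¹' F) (f ⁻¹' F') A := by
  obtain ⟨x, hxA, hcont⟩ := hf A hA hne
  exact ⟨x, hxA, fun ⟨hxF, hxF'⟩ => disjoint_left.1 hdisj
    (hcont.mem_of_mem_closure_inter_preimage hF hxF)
    (hcont.mem_of_mem_closure_inter_preimage hF' hxF')⟩

theorem barelyContinuous_Hset_separation
    {X Y : Type*} [TopologicalSpace X] [TopologicalSpace Y]
    (f : X → Y) (hf : BarelyContinuous f)
    (F F' : Set Y) (hF : IsClosed F) (hF' : IsClosed F')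
    (hdisj : Disjoint F F') :
    ∃ B : Set X, HSet B ∧ f ⁻¹' F ⊆ B ∧ B ⊆ (f ⁻¹' F')ᶜ :=
  exists_hSet_of_forall_exists_notMem_sepDeriv fun _ hA hne =>
    hf.exists_notMem_sepDeriv hF hF' hdisj hA hne
end

section
/- Let $f : X \to Y$ be a map between topological spaces and $\mathscr{B} = \bigcup_{n \in \omega} \mathscr{B}_n$ be a base for $f$ such that each family $\mathscr{B}_n$ consists of mutually disjoint sets. Then every point of $\bigcap_{n \in \omega} \bigcup_{B \in \mathscr{B}_n} \mathrm{int}\, B$ is a point of continuity of $f$. -/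
open Filter Topology Set

/-- A family `𝓑` of subsets of `X` is a base for `f : X → Y` if the preimage of
every open set of `Y` is a union of members of `𝓑`. -/
def IsBaseFor {X Y : Type*} [TopologicalSpace X] [TopologicalSpace Y]
    (f : X → Y) (𝓑 : Set (Set X)) : Prop :=
  ∀ V : Set Y, IsOpen V → ∃ S ⊆ 𝓑, f ⁻¹' V = ⋃₀ S

theorem base_of_disjoint_families_continuity
    {X Y : Type*} [TopologicalSpace X] [TopologicalSpace Y]
    (f : X → Y) (𝓑 : ℕ → Set (Set X))
    (hbase : IsBaseFor f (⋃ n, 𝓑 n))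
    (hdisj : ∀ n, ∀ B ∈ 𝓑 n, ∀ B' ∈ 𝓑 n, B ≠ B' → Disjoint B B') :
    ∀ x ∈ ⋂ n, ⋃ B ∈ 𝓑 n, interior B, ContinuousAt f x := by
  intro x hx
  rw [continuousAt_def]
  intro A hA
  obtain ⟨V, hVA, hVopen, hfxV⟩ := mem_nhds_iff.mp hA
  obtain ⟨S, hS𝓑, hSV⟩ := hbase V hVopen
  have hxV : x ∈ f ⁻¹' V := hfxV
  rw [hSV] at hxV
  obtain ⟨B₀, hB₀S, hxB₀⟩ := hxV
  obtain ⟨n, hB₀n⟩ := mem_iUnion.mp (hS𝓑 hB₀S)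
  have hxn := mem_iInter.mp hx n
  simp only [mem_iUnion] at hxn
  obtain ⟨B, hBn, hxB⟩ := hxn
  have hBB₀ : B = B₀ := by
    by_contra h
    exact (hdisj n B hBn B₀ hB₀n h).ne_of_mem (interior_subset hxB) hxB₀ rfl
  refine mem_of_superset (mem_nhds_iff.mpr ⟨interior B, subset_rfl, isOpen_interior, hxB⟩) ?_
  calc interior B ⊆ B₀ := hBB₀ ▸ interior_subset
    _ ⊆ f ⁻¹' V := hSV ▸ subset_sUnion_of_mem hB₀S
    _ ⊆ f ⁻¹' A := preimage_mono hVA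
end

section
/- Let $X$ be a hereditarily Baire topological space (every closed subspace of $X$ is a Baire space), $Y$ a topological space, and $f : X \to Y$ a $\sigma$-regular map. Then $f$ is barely continuous: for every nonempty closed $F \subseteq X$ the set of continuity points of $f|_F$ is dense in $F$. -/
/-!
At a point of `⋂ₙ Gₙ`, where `Gₙ` is the set of points at which the piece of the `n`-th partition
containing them (if any) is a neighbourhood, every member of the base containing the point is a
neighbourhood of it, so `f` is continuous there. Each `Gₙ` has dense interior: a nonempty open `O`
that meets some piece contains the nonempty open set `O ∩ U (ξ + 1)`, which lies inside the first
piece `ξ` that `O` meets; otherwise `O ⊆ Gₙ`. On a closed `F`, which is Baire, the Baire category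
theorem makes the intersection dense.
-/

universe u

open Filter Topology Set

/-- A regular transfinite sequence of open sets on `[0, α]`. -/
def IsRegularSeq {X : Type*} [TopologicalSpace X]
    (α : Ordinal) (U : Ordinal → Set X) : Prop :=
  (∀ ξ, IsOpen (U ξ)) ∧ U 0 = ∅ ∧
  (∀ ξ η, ξ ≤ η → U ξ ⊆ U η) ∧ U α = Set.univ ∧
  ∀ γ < α, Order.IsSuccLimit γ → U γ = ⋃ ξ : Set.Iio γ, U ξ.val

/-- The regular partition associated with a regular sequence. -/
def regularPieces {X : Type*} [TopologicalSpace X]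
    (α : Ordinal) (U : Ordinal → Set X) : Set (Set X) :=
  { S | ∃ ξ < α, S = U (ξ + 1) \ U ξ }

/-- `f` is σ-regular: a countable union of regular partitions is a base for `f`. -/
def SigmaRegular {X : Type u} {Y : Type*} [TopologicalSpace X] [TopologicalSpace Y]
    (f : X → Y) : Prop :=
  ∃ (a : ℕ → Ordinal.{u}) (U : ℕ → Ordinal.{u} → Set X),
    (∀ n, IsRegularSeq (a n) (U n)) ∧
    IsBaseFor f (⋃ n, regularPieces (a n) (U n))

section Pullback

variable {X Y Z : Type*} [TopologicalSpace X] [TopologicalSpace Y] [TopologicalSpace Z]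

theorem IsRegularSeq.preimage {α : Ordinal} {U : Ordinal → Set X} (hU : IsRegularSeq α U)
    {g : Z → X} (hg : Continuous g) : IsRegularSeq α (fun ξ ↦ g ⁻¹' U ξ) := by
  obtain ⟨hopen, hzero, hmono, htop, hlim⟩ := hU
  refine ⟨fun ξ ↦ (hopen ξ).preimage hg, by simp [hzero], fun ξ η h ↦ preimage_mono (hmono ξ η h),
    by simp [htop], fun γ hγ hγlim ↦ ?_⟩
  simp only [hlim γ hγ hγlim, preimage_iUnion]

theorem regularPieces_preimage (α : Ordinal) (U : Ordinal → Set X) (g : Z → X) :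
    regularPieces α (fun ξ ↦ g ⁻¹' U ξ) = preimage g '' regularPieces α U := by
  ext S
  simp only [regularPieces, mem_ofPred_eq, mem_image]
  constructor
  · rintro ⟨ξ, hξ, rfl⟩
    exact ⟨_, ⟨ξ, hξ, rfl⟩, rfl⟩
  · rintro ⟨_, ⟨ξ, hξ, rfl⟩, rfl⟩
    exact ⟨ξ, hξ, rfl⟩

theorem IsBaseFor.mono {f : X → Y} {𝓑 𝓒 : Set (Set X)} (hf : IsBaseFor f 𝓑) (h : 𝓑 ⊆ 𝓒) :
    IsBaseFor f 𝓒 := fun V hV ↦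
  let ⟨S, hS, hV⟩ := hf V hV
  ⟨S, hS.trans h, hV⟩

theorem IsBaseFor.comp {f : X → Y} {𝓑 : Set (Set X)} (hf : IsBaseFor f 𝓑) (g : Z → X) :
    IsBaseFor (f ∘ g) (preimage g '' 𝓑) := by
  intro V hV
  obtain ⟨S, hS, hfV⟩ := hf V hV
  refine ⟨preimage g '' S, image_mono hS, ?_⟩
  rw [preimage_comp, hfV, preimage_sUnion, sUnion_image]

end Pullback

theorem SigmaRegular.comp_continuous {X Z : Type u} {Y : Type*} [TopologicalSpace X]
    [TopologicalSpace Y] [TopologicalSpace Z] {f : X → Y} (hf : SigmaRegular f) {g : Z → X}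
    (hg : Continuous g) : SigmaRegular (f ∘ g) := by
  obtain ⟨a, U, hreg, hbase⟩ := hf
  refine ⟨a, fun n ξ ↦ g ⁻¹' U n ξ, fun n ↦ (hreg n).preimage hg, (hbase.comp g).mono ?_⟩
  simp only [image_iUnion, regularPieces_preimage, subset_refl]

namespace IsRegularSeq

variable {X : Type*} [TopologicalSpace X] {α : Ordinal} {U : Ordinal → Set X}

theorem eq_of_mem_piece (hU : IsRegularSeq α U) {ξ η : Ordinal} {x : X}
    (hξ : x ∈ U (ξ + 1) \ U ξ) (hη : x ∈ U (η + 1) \ U η) : ξ = η := by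
  have hmono := hU.2.2.1
  by_contra hne
  rcases lt_or_gt_of_ne hne with h | h
  · exact hη.2 (hmono _ _ (Order.add_one_le_iff.2 h) hξ.1)
  · exact hξ.2 (hmono _ _ (Order.add_one_le_iff.2 h) hη.1)

theorem exists_mem_piece_of_mem (hU : IsRegularSeq α U) {γ : Ordinal} (hγ : γ < α) {x : X}
    (hx : x ∈ U γ) : ∃ ξ < γ, x ∈ U (ξ + 1) \ U ξ := by
  obtain ⟨-, hzero, -, -, hlim⟩ := hU
  induction γ using WellFoundedLT.induction with
  | ind γ ih =>
  by_cases hbelow : ∃ ζ < γ, x ∈ U ζ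
  · obtain ⟨ζ, hζ, hxζ⟩ := hbelow
    obtain ⟨ξ, hξ, hxξ⟩ := ih ζ hζ (hζ.trans hγ) hxζ
    exact ⟨ξ, hξ.trans hζ, hxξ⟩
  push Not at hbelow
  rcases Ordinal.zero_or_succ_or_isSuccLimit γ with rfl | ⟨η, rfl⟩ | hγlim
  · simp [hzero] at hx
  · exact ⟨η, Order.lt_succ η, by rwa [← Order.succ_eq_add_one], hbelow η (Order.lt_succ η)⟩
  · rw [hlim γ hγ hγlim, mem_iUnion] at hx
    obtain ⟨⟨ζ, hζ⟩, hxζ⟩ := hx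
    exact absurd hxζ (hbelow ζ hζ)

theorem exists_open_subset_forall_piece_mem_nhds (hU : IsRegularSeq α U) {O : Set X}
    (hO : IsOpen O) (hOne : O.Nonempty) :
    ∃ W ⊆ O, IsOpen W ∧ W.Nonempty ∧
      ∀ x ∈ W, ∀ S ∈ regularPieces α U, x ∈ S → S ∈ 𝓝 x := by
  by_cases hmeet : ∃ ξ < α, (O ∩ (U (ξ + 1) \ U ξ)).Nonempty
  swap
  · refine ⟨O, subset_rfl, hO, hOne, ?_⟩
    rintro x hxO _ ⟨ξ, hξ, rfl⟩ hxS
    exact absurd ⟨ξ, hξ, x, hxO, hxS⟩ hmeet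
  obtain ⟨ξ, ⟨hξ, hOξ⟩, hmin⟩ := wellFounded_lt.has_min _ hmeet
  have hmiss : ∀ x ∈ O, x ∉ U ξ := fun x hxO hxξ ↦
    let ⟨ζ, hζ, hxζ⟩ := hU.exists_mem_piece_of_mem hξ hxξ
    hmin ζ ⟨hζ.trans hξ, x, hxO, hxζ⟩ hζ
  have hW : IsOpen (O ∩ U (ξ + 1)) := hO.inter (hU.1 _)
  refine ⟨O ∩ U (ξ + 1), inter_subset_left, hW, hOξ.mono (inter_subset_inter_right _ sdiff_subset),
    ?_⟩
  rintro x hx _ ⟨ζ, -, rfl⟩ hxζ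
  obtain rfl := hU.eq_of_mem_piece ⟨hx.2, hmiss x hx.1⟩ hxζ
  exact mem_of_superset (hW.mem_nhds hx) fun y hy ↦ ⟨hy.2, hmiss y hy.1⟩

theorem eventually_residual_forall_piece_mem_nhds (hU : IsRegularSeq α U) :
    ∀ᶠ x in residual X, ∀ S ∈ regularPieces α U, x ∈ S → S ∈ 𝓝 x := by
  refine mem_of_superset (residual_of_dense_open isOpen_interior ?_) interior_subset
  refine dense_iff_inter_open.2 fun O hO hOne ↦ ?_
  obtain ⟨W, hWO, hW, ⟨x, hx⟩, hWgood⟩ := hU.exists_open_subset_forall_piece_mem_nhds hO hOne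
  exact ⟨x, hWO hx, interior_maximal hWgood hW hx⟩

end IsRegularSeq

theorem IsBaseFor.continuousAt {X Y : Type*} [TopologicalSpace X] [TopologicalSpace Y]
    {f : X → Y} {𝓑 : Set (Set X)} (hf : IsBaseFor f 𝓑) {x : X}
    (hx : ∀ S ∈ 𝓑, x ∈ S → S ∈ 𝓝 x) : ContinuousAt f x := by
  refine tendsto_nhds.2 fun V hV hfx ↦ ?_
  obtain ⟨S, hS, hfV⟩ := hf V hV
  obtain ⟨T, hTS, hxT⟩ : x ∈ ⋃₀ S := hfV ▸ hfx
  exact mem_of_superset (hx T (hS hTS) hxT) (hfV ▸ subset_sUnion_of_mem hTS)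

theorem SigmaRegular.eventually_residual_continuousAt {X : Type u} {Y : Type*}
    [TopologicalSpace X] [TopologicalSpace Y] {f : X → Y} (hf : SigmaRegular f) :
    ∀ᶠ x in residual X, ContinuousAt f x := by
  obtain ⟨a, U, hreg, hbase⟩ := hf
  filter_upwards [eventually_countable_forall.2 fun n ↦
    (hreg n).eventually_residual_forall_piece_mem_nhds] with x hx
  refine hbase.continuousAt fun S hS ↦ ?_
  obtain ⟨n, hn⟩ := mem_iUnion.1 hS
  exact hx n S hn

theorem sigmaRegular_barelyContinuous
    {X Y : Type*} [TopologicalSpace X] [TopologicalSpace Y]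
    (hX : ∀ F : Set X, IsClosed F → BaireSpace F)
    (f : X → Y) (hf : SigmaRegular f) :
    ∀ F : Set X, IsClosed F → F.Nonempty →
      ∀ x ∈ F, ∀ U ∈ 𝓝[F] x, ∃ y ∈ U ∩ F, ContinuousWithinAt f F y := by
  intro F hF _ x hx U hU
  have := hX F hF
  have hdense : Dense {y : F | ContinuousAt (F.domRestrict f) y} := dense_of_mem_residual
    (hf.comp_continuous continuous_subtype_val).eventually_residual_continuousAt
  have hU' : Subtype.val ⁻¹' U ∈ 𝓝 (⟨x, hx⟩ : F) := by
    rwa [← mem_map, map_nhds_subtype_val]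
  obtain ⟨y, hyU, hy⟩ := mem_closure_iff_nhds.1 (hdense ⟨x, hx⟩) _ hU'
  exact ⟨y, ⟨hyU, y.2⟩, (continuousWithinAt_iff_continuousAt_domRestrict f y.2).2 hy⟩
end

section
/- Let $X$ be a topological space and $Y$ a second countable space. Then every $H_\sigma$-measurable map $f : X \to Y$ is $\sigma$-regular. -/
universe u

open Filter Topology Set

/-- `f` is `H_σ`-measurable: preimages of open sets are countable unions of
`H`-sets. -/
def HSigmaMeasurable {X Y : Type*} [TopologicalSpace X] [TopologicalSpace Y]
    (f : X → Y) : Prop :=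
  ∀ V : Set Y, IsOpen V →
    ∃ B : ℕ → Set X, (∀ n, HSet (B n)) ∧ f ⁻¹' V = ⋃ n, B n

/-!
Every `H`-set `A` is exhausted by Hausdorff's transfinite derivation: starting from `X`, each step
passes from a closed set `F` to `F ∩ closure (F ∩ A)` or to `F ∩ closure (F \ A)`, choosing the
first one when it is a proper subset. Each removed layer then lies inside `A` or outside `A`, and
the derivation can only stall at `∅`, because a nonempty closed `F` in which `F ∩ A` and `F \ A`
are both dense would witness that `A` is not an `H`-set. The complements of the derived sets form
a regular sequence, so `A` is a union of pieces of a regular partition. For `H_σ`-measurable `f`,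
the preimages of the members of a countable base of `Y` are countable unions of `H`-sets, which
gives countably many regular partitions whose pieces together form a base for `f`.
-/

open TopologicalSpace OrderDual

lemma exists_mem_diff_add_one_of_notMem {X : Type*} {G : Ordinal → Set X} (hzero : G 0 = univ)
    (hlimit : ∀ γ, Order.IsSuccLimit γ → G γ = ⋂ ξ : Iio γ, G ξ.1) {x : X} {α : Ordinal}
    (hx : x ∉ G α) : ∃ ξ < α, x ∈ G ξ \ G (ξ + 1) := by
  induction α using Ordinal.limitRecOn with
  | zero => simp [hzero] at hx
  | add_one o ih =>
    by_cases hxo : x ∈ G o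
    · exact ⟨o, lt_add_one o, hxo, hx⟩
    · obtain ⟨ξ, hξ, hxξ⟩ := ih hxo
      exact ⟨ξ, hξ.trans (lt_add_one o), hxξ⟩
  | limit o ho ih =>
    rw [hlimit o ho, mem_iInter, not_forall] at hx
    obtain ⟨⟨p, hp⟩, hxp⟩ := hx
    obtain ⟨ξ, hξ, hxξ⟩ := ih p hp hxp
    exact ⟨ξ, hξ.trans hp, hxξ⟩

lemma isRegularSeq_compl {X : Type*} [TopologicalSpace X] {α : Ordinal} {F : Ordinal → Closeds X}
    (hzero : F 0 = ⊤) (hanti : Antitone F) (hα : F α = ⊥)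
    (hlimit : ∀ γ < α, Order.IsSuccLimit γ → F γ = ⨅ ξ : Iio γ, F ξ.1) :
    IsRegularSeq α fun ξ => (F ξ : Set X)ᶜ := by
  refine ⟨fun ξ => (F ξ).isClosed.isOpen_compl, by simp [hzero],
    fun _ _ h => compl_subset_compl.mpr (hanti h), by simp [hα], fun γ hγ hlim => ?_⟩
  simp only [hlimit γ hγ hlim, Closeds.coe_iInf, compl_iInter]

section HausdorffDerivation

variable {X : Type u} [TopologicalSpace X] (A : Set X)

noncomputable def hausdorffStep (F : Closeds X) : Closeds X :=
  open Classical in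
  if (F : Set X) ⊆ closure (F ∩ A) then F ⊓ .closure (F \ A) else F ⊓ .closure (F ∩ A)

/-- Mathlib's `transfiniteIterate` takes suprema at limits, so the decreasing derivation is
iterated in the order dual. -/
noncomputable def hausdorffDerivation (ξ : Ordinal.{u}) : Closeds X :=
  ofDual (transfiniteIterate (I := (Closeds X)ᵒᵈ) (toDual ∘ hausdorffStep A ∘ ofDual) ξ ⊥)

lemma hausdorffStep_le (F : Closeds X) : hausdorffStep A F ≤ F := by
  unfold hausdorffStep
  split <;> exact inf_le_left

lemma diff_hausdorffStep_subset_or_disjoint (F : Closeds X) :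
    (F : Set X) \ hausdorffStep A F ⊆ A ∨ Disjoint ((F : Set X) \ hausdorffStep A F) A := by
  unfold hausdorffStep
  split
  · refine Or.inl fun x ⟨hxF, hx⟩ => ?_
    by_contra hxA
    exact hx ⟨hxF, subset_closure ⟨hxF, hxA⟩⟩
  · refine Or.inr <| disjoint_left.mpr fun x ⟨hxF, hx⟩ hxA => ?_
    exact hx ⟨hxF, subset_closure ⟨hxF, hxA⟩⟩

lemma hausdorffDerivation_zero : hausdorffDerivation A 0 = ⊤ := by
  rw [← Ordinal.bot_eq_zero]
  exact congrArg ofDual (transfiniteIterate_bot (I := (Closeds X)ᵒᵈ) _ _)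

lemma hausdorffDerivation_add_one (ξ : Ordinal.{u}) :
    hausdorffDerivation A (ξ + 1) = hausdorffStep A (hausdorffDerivation A ξ) := by
  rw [← Order.succ_eq_add_one]
  exact congrArg ofDual (transfiniteIterate_succ (I := (Closeds X)ᵒᵈ) _ _ _ (not_isMax ξ))

lemma hausdorffDerivation_of_isSuccLimit {γ : Ordinal.{u}} (hγ : Order.IsSuccLimit γ) :
    hausdorffDerivation A γ = ⨅ ξ : Iio γ, hausdorffDerivation A ξ.1 :=
  congrArg ofDual (transfiniteIterate_limit (I := (Closeds X)ᵒᵈ) _ _ _ hγ)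

lemma antitone_hausdorffDerivation : Antitone (hausdorffDerivation A) :=
  fun _ _ h => monotone_transfiniteIterate (I := (Closeds X)ᵒᵈ) _ _ (fun F => hausdorffStep_le A (ofDual F)) h

variable {A}

lemma HSet.eq_empty_of_subset_closure {F : Set X} (hA : HSet A) (hF : IsClosed F)
    (hin : F ⊆ closure (F ∩ A)) (hout : F ⊆ closure (F \ A)) : F = ∅ := by
  have huniv : (Subtype.val ⁻¹' (closure (F ∩ A) ∩ closure (F \ A)) : Set F) = univ :=
    eq_univ_of_forall fun x => ⟨hin x.2, hout x.2⟩
  simpa [huniv, IsNowhereDense] using hA F hF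

lemma HSet.hausdorffStep_lt {F : Closeds X} (hA : HSet A) (hF : F ≠ ⊥) : hausdorffStep A F < F := by
  refine (hausdorffStep_le A F).lt_of_ne fun h => ?_
  unfold hausdorffStep at h
  split at h
  case isTrue hin =>
    have hout : F ≤ _ := inf_eq_left.mp h
    exact hF (Closeds.coe_eq_empty.mp (hA.eq_empty_of_subset_closure F.isClosed hin hout))
  case isFalse hin =>
    have hin' : F ≤ _ := inf_eq_left.mp h
    exact hin hin'

lemma HSet.exists_hausdorffDerivation_eq_bot (hA : HSet A) :
    ∃ α, hausdorffDerivation A α = ⊥ :=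
  top_mem_range_transfiniteIterate (I := (Closeds X)ᵒᵈ) _ _ (fun _ hF => hA.hausdorffStep_lt hF)
    (le_bot_iff.mp (hausdorffStep_le A ⊥)) (not_injective_of_ordinal _)

lemma HSet.exists_isRegularSeq (hA : HSet A) :
    ∃ (α : Ordinal.{u}) (U : Ordinal.{u} → Set X), IsRegularSeq α U ∧
      ∃ S ⊆ regularPieces α U, A = ⋃₀ S := by
  obtain ⟨α, hα⟩ := hA.exists_hausdorffDerivation_eq_bot
  refine ⟨α, fun ξ => (hausdorffDerivation A ξ : Set X)ᶜ,
    isRegularSeq_compl (hausdorffDerivation_zero A) (antitone_hausdorffDerivation A) hα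
      fun γ _ hγ => hausdorffDerivation_of_isSuccLimit A hγ,
    {P | P ∈ regularPieces α _ ∧ P ⊆ A}, fun P hP => hP.1,
    subset_antisymm (fun x hx => ?_) (sUnion_subset fun P hP => hP.2)⟩
  obtain ⟨ξ, hξ, hxξ⟩ := exists_mem_diff_add_one_of_notMem
    (G := fun ξ => (hausdorffDerivation A ξ : Set X)) (by simp [hausdorffDerivation_zero])
    (fun γ hγ => by simp [hausdorffDerivation_of_isSuccLimit A hγ]) (α := α) (by simp [hα])
  have hpiece : (hausdorffDerivation A ξ : Set X) \ hausdorffDerivation A (ξ + 1) ⊆ A := by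
    rw [hausdorffDerivation_add_one]
    exact (diff_hausdorffStep_subset_or_disjoint A _).resolve_right
      fun hdisj => disjoint_left.mp hdisj (by rwa [← hausdorffDerivation_add_one]) hx
  exact ⟨_, ⟨⟨ξ, hξ, (compl_sdiff_compl ..).symm⟩, hpiece⟩, hxξ⟩

end HausdorffDerivation

lemma isBaseFor_of_isTopologicalBasis {X Y : Type*} [TopologicalSpace X] [TopologicalSpace Y]
    {f : X → Y} {𝓑 : Set (Set X)} {𝓥 : Set (Set Y)} (h𝓥 : IsTopologicalBasis 𝓥)
    (h : ∀ V ∈ 𝓥, ∃ S ⊆ 𝓑, f ⁻¹' V = ⋃₀ S) : IsBaseFor f 𝓑 := by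
  choose! S hS𝓑 hS using h
  intro W hW
  refine ⟨⋃ V ∈ {V ∈ 𝓥 | V ⊆ W}, S V, iUnion₂_subset fun V hV => hS𝓑 V hV.1, ?_⟩
  conv_lhs => rw [h𝓥.open_eq_sUnion' hW, preimage_sUnion]
  simp only [sUnion_iUnion]
  exact iUnion₂_congr fun V hV => hS V hV.1

lemma sigmaRegular_of_countable {X : Type u} {Y ι : Type*} [TopologicalSpace X]
    [TopologicalSpace Y] [Countable ι] [Nonempty ι] {f : X → Y} (a : ι → Ordinal.{u})
    (U : ι → Ordinal.{u} → Set X) (hU : ∀ i, IsRegularSeq (a i) (U i))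
    (hbase : IsBaseFor f (⋃ i, regularPieces (a i) (U i))) : SigmaRegular f := by
  obtain ⟨g, hg⟩ := exists_surjective_nat ι
  exact ⟨a ∘ g, U ∘ g, fun n => hU (g n), by
    rwa [← hg.iUnion_comp fun i => regularPieces (a i) (U i)] at hbase⟩

theorem hSigmaMeasurable_sigmaRegular
    {X Y : Type*} [TopologicalSpace X] [TopologicalSpace Y]
    [SecondCountableTopology Y]
    (f : X → Y) (hf : HSigmaMeasurable f) :
    SigmaRegular f := by
  -- `∅` is added so that the index type `𝓥 × ℕ` below is nonempty even when `Y` is empty.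
  set 𝓥 := insert ∅ (countableBasis Y)
  have h𝓥 : IsTopologicalBasis 𝓥 := (isBasis_countableBasis Y).insert_empty
  have : Countable 𝓥 := ((countable_countableBasis Y).insert ∅).to_subtype
  have : Nonempty 𝓥 := ⟨⟨∅, mem_insert _ _⟩⟩
  choose B hBH hBU using fun V : 𝓥 => hf V (h𝓥.isOpen V.2)
  choose a U hU S hS hBS using fun i : 𝓥 × ℕ => (hBH i.1 i.2).exists_isRegularSeq
  refine sigmaRegular_of_countable a U hU (isBaseFor_of_isTopologicalBasis h𝓥 fun V hV => ?_)
  refine ⟨⋃ m, S (⟨V, hV⟩, m), iUnion_subset fun m => (hS _).trans ?_, ?_⟩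
  · exact subset_iUnion (fun i => regularPieces (a i) (U i)) _
  · rw [hBU ⟨V, hV⟩, sUnion_iUnion]
    exact iUnion_congr fun m => hBS (⟨V, hV⟩, m)
end

section
/- Let $X$ be a hereditarily Baire metrizable separable space, $Y$ a metrizable space, and $f : X \to Y$ barely continuous. Then the image $f(X)$ is separable. -/
open Filter Topology Set

set_option maxHeartbeats 1000000 in
theorem barelyContinuous_image_separable
    {X Y : Type*} [TopologicalSpace X] [TopologicalSpace Y]
    [TopologicalSpace.MetrizableSpace X] [TopologicalSpace.SeparableSpace X]
    [TopologicalSpace.MetrizableSpace Y]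
    (hX : ∀ F : Set X, IsClosed F → BaireSpace F)
    (f : X → Y)
    (hf : ∀ F : Set X, IsClosed F → F.Nonempty →
      ∃ x ∈ F, ContinuousWithinAt f F x) :
    TopologicalSpace.IsSeparable (Set.range f) := by
  letI : MetricSpace X := TopologicalSpace.metrizableSpaceMetric X
  letI : MetricSpace Y := TopologicalSpace.metrizableSpaceMetric Y
  haveI : SecondCountableTopology X :=
    UniformSpace.secondCountable_of_separable X
  by_contra hsep
  -- Step 1: extract an uncountable ε-separated subset of the range.
  obtain ⟨ε, hε, R, hRsub, hRunc, hRsep⟩ :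
      ∃ ε > 0, ∃ R ⊆ Set.range f, ¬R.Countable ∧
        R.Pairwise (fun a b => ε ≤ dist a b) := by
    by_contra h
    push_neg at h
    apply hsep
    have key : ∀ n : ℕ, ∃ R ⊆ Set.range f, R.Countable ∧
        ∀ y ∈ Set.range f, ∃ z ∈ R, dist y z < 1 / (n + 1 : ℝ) := by
      intro n
      have hε' : (0 : ℝ) < 1 / (n + 1 : ℝ) := by positivity
      have hzorn : ∀ c ⊆ {R : Set Y | R ⊆ Set.range f ∧
            R.Pairwise (fun a b => 1 / (n + 1 : ℝ) ≤ dist a b)},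
          IsChain (· ⊆ ·) c → ∃ ub ∈ {R : Set Y | R ⊆ Set.range f ∧
            R.Pairwise (fun a b => 1 / (n + 1 : ℝ) ≤ dist a b)}, ∀ s ∈ c, s ⊆ ub := by
        intro c hc hchain
        refine ⟨⋃₀ c, ⟨?_, ?_⟩, fun s hs => subset_sUnion_of_mem hs⟩
        · exact sUnion_subset fun s hs => (hc hs).1
        · intro a ha b hb hab
          obtain ⟨s, hs, has⟩ := ha
          obtain ⟨t, ht, hbt⟩ := hb
          rcases hchain.total hs ht with hst | hts
          · exact (hc ht).2 (hst has) hbt hab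
          · exact (hc hs).2 has (hts hbt) hab
      obtain ⟨R, hR⟩ := zorn_subset
          {R : Set Y | R ⊆ Set.range f ∧
            R.Pairwise (fun a b => 1 / (n + 1 : ℝ) ≤ dist a b)} hzorn
      refine ⟨R, hR.prop.1, ?_, ?_⟩
      · by_contra hc
        exact absurd hR.prop.2 (h _ hε' R hR.prop.1 hc)
      · intro y hy
        by_contra hz
        push_neg at hz
        have hyR : y ∉ R := by
          intro hyR
          have := hz y hyR
          simp only [dist_self] at this
          linarith
        have : insert y R ∈ {R : Set Y | R ⊆ Set.range f ∧
            R.Pairwise (fun a b => 1 / (n + 1 : ℝ) ≤ dist a b)} := by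
          constructor
          · exact insert_subset hy hR.prop.1
          · refine hR.prop.2.insert fun z hz' hne => ?_
            have := hz z hz'
            exact ⟨this, by rwa [dist_comm]⟩
        exact hyR (hR.2 this (subset_insert y R) (mem_insert y R))
    choose R hRsub hRc hRd using key
    refine ⟨⋃ n, R n, countable_iUnion hRc, ?_⟩
    intro y hy
    rw [Metric.mem_closure_iff]
    intro δ hδ
    obtain ⟨n, hn⟩ := exists_nat_one_div_lt hδ
    obtain ⟨z, hz, hdz⟩ := hRd n y hy
    exact ⟨z, mem_iUnion.2 ⟨n, hz⟩, hdz.trans hn⟩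
  -- Step 2: pull back to an uncountable subset of X with ε-separated images.
  have hch : ∀ y ∈ R, ∃ x : X, f x = y := fun y hy => hRsub hy
  choose t ht using hch
  let g : {y // y ∈ R} → X := fun y => t y.1 y.2
  have hgf : ∀ y : {y // y ∈ R}, f (g y) = y.1 := fun y => ht y.1 y.2
  set T : Set X := Set.range g with hT
  have hTunc : ¬T.Countable := by
    intro hc
    apply hRunc
    have : R ⊆ f '' T := by
      intro y hy
      exact ⟨g ⟨y, hy⟩, ⟨⟨y, hy⟩, rfl⟩, hgf ⟨y, hy⟩⟩
    exact (hc.image f).mono this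
  have hTsep : ∀ a ∈ T, ∀ b ∈ T, a ≠ b → ε ≤ dist (f a) (f b) := by
    rintro a ⟨ya, rfl⟩ b ⟨yb, rfl⟩ hab
    have hne : ya.1 ≠ yb.1 := by
      intro h
      exact hab (congrArg g (Subtype.ext h))
    have := hRsep ya.2 yb.2 hne
    rwa [hgf ya, hgf yb]
  -- Step 3: condensation points.
  obtain ⟨b, hbc, -, hb⟩ := TopologicalSpace.exists_countable_basis X
  set S : Set (Set X) := {U ∈ b | (U ∩ T).Countable} with hS
  set C : Set X := T ∩ ⋃₀ S with hC
  have hSc : S.Countable := hbc.mono (sep_subset _ _)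
  have hCc : C.Countable := by
    have h1 : (⋃ U ∈ S, (U ∩ T)).Countable := hSc.biUnion fun U hU => hU.2
    refine h1.mono ?_
    rintro x ⟨hxT, U, hU, hxU⟩
    exact mem_iUnion₂.2 ⟨U, hU, hxU, hxT⟩
  set T' : Set X := T \ C with hT'
  have hT'unc : ¬T'.Countable := fun hc => hTunc ((hc.union hCc).mono (by
    intro x hx
    by_cases hxC : x ∈ C
    · exact Or.inr hxC
    · exact Or.inl ⟨hx, hxC⟩))
  -- every neighborhood of a point of T' meets T uncountably
  have hcond : ∀ x ∈ T', ∀ U : Set X, IsOpen U → x ∈ U → ¬(U ∩ T).Countable := by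
    intro x hx U hU hxU hc
    obtain ⟨V, hVb, hxV, hVU⟩ := hb.exists_subset_of_mem_open hxU hU
    have hVS : V ∈ S := ⟨hVb, hc.mono (inter_subset_inter_left _ hVU)⟩
    exact hx.2 ⟨hx.1, V, hVS, hxV⟩
  set F : Set X := closure T' with hF
  have hFne : F.Nonempty := by
    rcases T'.eq_empty_or_nonempty with h | h
    · exact absurd (h ▸ countable_empty) hT'unc
    · exact h.mono subset_closure
  obtain ⟨x, hxF, hcont⟩ := hf F isClosed_closure hFne
  -- continuity at x gives a neighborhood mapped into a small ball
  have : ∀ᶠ y in 𝓝[F] x, dist (f y) (f x) < ε / 2 :=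
    hcont (Metric.ball_mem_nhds (f x) (by positivity))
  obtain ⟨U, hUopen, hxU, hUF⟩ := mem_nhdsWithin.1 this
  -- U meets T', hence U ∩ T' is uncountable, get two distinct points
  obtain ⟨t₀, ht₀U, ht₀T'⟩ : (U ∩ T').Nonempty := by
    have := mem_closure_iff.1 hxF U hUopen hxU
    exact this
  have hUT'unc : ¬(U ∩ T').Countable := by
    intro hc
    apply hcond t₀ ht₀T' U hUopen ht₀U
    have : U ∩ T ⊆ (U ∩ T') ∪ C := by
      rintro z ⟨hzU, hzT⟩
      by_cases hzC : z ∈ C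
      · exact Or.inr hzC
      · exact Or.inl ⟨hzU, hzT, hzC⟩
    exact ((hc.union hCc).mono this)
  have hinf : (U ∩ T').Infinite := by
    intro hfin
    exact hUT'unc hfin.countable
  obtain ⟨a, ha, c, hc, hac⟩ := hinf.nontrivial
  have haF : a ∈ U ∩ F := ⟨ha.1, subset_closure ha.2⟩
  have hcF : c ∈ U ∩ F := ⟨hc.1, subset_closure hc.2⟩
  have h1 := hUF haF
  have h2 := hUF hcF
  simp only [mem_setOf_eq] at h1 h2
  have hsep' := hTsep a ha.2.1 c hc.2.1 hac
  have : dist (f a) (f c) < ε := by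
    calc dist (f a) (f c) ≤ dist (f a) (f x) + dist (f c) (f x) := dist_triangle_right _ _ _
    _ < ε / 2 + ε / 2 := add_lt_add h1 h2
    _ = ε := by ring
  linarith
end

section
/- The Riemann function $f : [0,1] \to [0,1]$ defined by $f(x) = 0$ for irrational $x$ and $f(m/n) = 1/n$ for $m/n$ in lowest terms, together with the sets $Y_n = \{0\} \cup [1/(n+1), 1]$, has the property that there is no covering $(C_n : n \in \omega)$ of $[0,1]$ by $F_\sigma$-sets with $f(C_n) \subseteq Y_n$ for all $n$. -/
open Filter Topology Set

lemma exists_rat_btwn_large_den {a b : ℝ} (hab : a < b) (N : ℕ) :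
    ∃ q : ℚ, a < (q : ℝ) ∧ (q : ℝ) < b ∧ N < q.den := by
  obtain ⟨p, hpN, hp⟩ := Nat.exists_infinite_primes (max N ⌈2 / (b - a)⌉₊ + 1)
  have hpN' : N < p := lt_of_le_of_lt (le_max_left _ _) (Nat.lt_of_succ_le hpN)
  have hppos : (0 : ℝ) < p := by exact_mod_cast hp.pos
  have h2 : 2 < (b - a) * p := by
    have h1 : (⌈2 / (b - a)⌉₊ : ℝ) < p := by
      exact_mod_cast lt_of_le_of_lt (le_max_right N _) (Nat.lt_of_succ_le hpN)
    have h2' : 2 / (b - a) < p := lt_of_le_of_lt (Nat.le_ceil _) h1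
    calc (2 : ℝ) = 2 / (b - a) * (b - a) := (div_mul_cancel₀ 2 (by linarith : b - a ≠ 0)).symm
    _ < p * (b - a) := mul_lt_mul_of_pos_right h2' (by linarith)
    _ = (b - a) * p := by ring
  set m : ℤ := ⌊a * p⌋ + 1 with hm
  have hm1 : a * p < m := by
    have := Int.lt_floor_add_one (a * p); push_cast [hm]; linarith
  have hm2 : (m : ℝ) + 1 < b * p := by
    have := Int.floor_le (a * p); push_cast [hm]; nlinarith
  obtain ⟨m', hm'1, hm'2, hm'nd⟩ : ∃ m' : ℤ, a * p < m' ∧ (m' : ℝ) < b * p ∧ ¬ (p : ℤ) ∣ m' := by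
    by_cases hd : (p : ℤ) ∣ m
    · refine ⟨m + 1, by push_cast; linarith, by push_cast; linarith, ?_⟩
      intro hd'
      have h1 : (p : ℤ) ∣ 1 := (dvd_add_right hd).mp hd'
      have := Int.le_of_dvd one_pos h1
      have := hp.two_le
      omega
    · exact ⟨m, hm1, by linarith, hd⟩
  have hcop : Nat.Coprime m'.natAbs ((p : ℤ)).natAbs := by
    rw [Int.natAbs_natCast, Nat.coprime_comm]
    exact (Nat.Prime.coprime_iff_not_dvd hp).mpr (fun h => hm'nd (Int.natCast_dvd.mpr h))
  have hden : (((m' : ℚ) / (p : ℚ)).den : ℤ) = (p : ℤ) := by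
    have h := Rat.den_div_eq_of_coprime (a := m') (b := (p : ℤ))
      (by exact_mod_cast hppos) hcop
    have hc : (((p : ℤ) : ℚ)) = (p : ℚ) := by push_cast; ring
    rw [← hc]; exact h
  refine ⟨(m' : ℚ) / p, ?_, ?_, ?_⟩
  · push_cast
    rw [lt_div_iff₀ hppos]
    exact hm'1
  · push_cast
    rw [div_lt_iff₀ hppos]
    exact hm'2
  · have : ((m' : ℚ) / (p : ℚ)).den = p := by exact_mod_cast hden
    omega

theorem riemann_function_no_Fsigma_cover
    (f : ℝ → ℝ)
    (hirr : ∀ x ∈ Set.Icc (0 : ℝ) 1, Irrational x → f x = 0)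
    (hrat : ∀ q : ℚ, (q : ℝ) ∈ Set.Icc (0 : ℝ) 1 → f q = 1 / (q.den : ℝ)) :
    ¬ ∃ C : ℕ → Set ℝ,
        (∀ n, ∃ F : ℕ → Set ℝ, (∀ k, IsClosed (F k)) ∧ C n = ⋃ k, F k) ∧
        (∀ n, C n ⊆ Set.Icc (0 : ℝ) 1) ∧
        (⋃ n, C n) = Set.Icc (0 : ℝ) 1 ∧
        ∀ n, f '' C n ⊆ {0} ∪ Set.Icc (1 / (n + 1 : ℝ)) 1 := by
  rintro ⟨C, h1, _h2, h3, h4⟩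
  choose F hFclosed hFeq using h1
  haveI : CompleteSpace (Set.Icc (0:ℝ) 1) := isClosed_Icc.completeSpace_coe
  haveI : Nonempty (Set.Icc (0:ℝ) 1) := (Set.nonempty_Icc.2 zero_le_one).to_subtype
  set g : ℕ × ℕ → Set (Set.Icc (0:ℝ) 1) :=
    fun p => Subtype.val ⁻¹' F p.1 p.2 with hg
  have hgclosed : ∀ p, IsClosed (g p) :=
    fun p => (hFclosed p.1 p.2).preimage continuous_subtype_val
  have hguniv : (⋃ p, g p) = univ := by
    ext x
    simp only [mem_iUnion, mem_univ, iff_true, hg, mem_preimage]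
    have hx : (x : ℝ) ∈ ⋃ n, C n := by rw [h3]; exact x.2
    obtain ⟨n, hn⟩ := mem_iUnion.mp hx
    rw [hFeq n] at hn
    obtain ⟨k, hk⟩ := mem_iUnion.mp hn
    exact ⟨(n, k), hk⟩
  obtain ⟨⟨n, k⟩, x, hx⟩ := nonempty_interior_of_iUnion_of_closed hgclosed hguniv
  rw [mem_interior_iff_mem_nhds, Metric.mem_nhds_iff] at hx
  obtain ⟨ε, hε, hball⟩ := hx
  have hx0 : (0:ℝ) ≤ (x : ℝ) := x.2.1
  have hx1 : (x : ℝ) ≤ 1 := x.2.2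
  set a : ℝ := max 0 ((x : ℝ) - ε)
  set b : ℝ := min 1 ((x : ℝ) + ε)
  have hab : a < b := by
    apply max_lt <;> apply lt_min <;> linarith
  obtain ⟨q, hq1, hq2, hqden⟩ := exists_rat_btwn_large_den hab (n + 1)
  have hq0 : (0:ℝ) ≤ (q : ℝ) := le_trans (le_max_left _ _) hq1.le
  have hq1' : (q : ℝ) ≤ 1 := le_trans hq2.le (min_le_left _ _)
  have hqmem : (q : ℝ) ∈ Set.Icc (0:ℝ) 1 := ⟨hq0, hq1'⟩
  have hqball : (⟨(q : ℝ), hqmem⟩ : Set.Icc (0:ℝ) 1) ∈ Metric.ball x ε := by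
    rw [Metric.mem_ball, Subtype.dist_eq, Real.dist_eq]
    show |(q : ℝ) - (x : ℝ)| < ε
    rw [abs_lt]
    constructor
    · have := lt_of_le_of_lt (le_max_right 0 ((x : ℝ) - ε)) hq1
      linarith
    · have := lt_of_lt_of_le hq2 (min_le_right 1 ((x : ℝ) + ε))
      linarith
  have hqF : (q : ℝ) ∈ F n k := hball hqball
  have hqC : (q : ℝ) ∈ C n := by rw [hFeq n]; exact mem_iUnion.mpr ⟨k, hqF⟩
  have hfq : f q ∈ {0} ∪ Set.Icc (1 / (n + 1 : ℝ)) 1 := h4 n ⟨_, hqC, rfl⟩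
  rw [hrat q hqmem] at hfq
  have hdenpos : (0:ℝ) < (q.den : ℝ) := by exact_mod_cast q.pos
  have hlt : 1 / (q.den : ℝ) < 1 / (n + 1 : ℝ) := by
    apply one_div_lt_one_div_of_lt (by positivity)
    exact_mod_cast hqden
  rcases hfq with h | h
  · simp only [mem_singleton_iff] at h
    have : (0:ℝ) < 1 / (q.den : ℝ) := by positivity
    linarith [this.ne' h]
  · exact absurd h.1 (not_le.mpr hlt)
end
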